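/- arXiv:1501.06104 — 7 statements merged into one kernel-verified Lean document; each statement's English description precedes it below -/
import Mathlib

section
/- Let Δ : ℕ × ℕ → ℝ satisfy Δ(N,0) = 0 for all N, and the recursion Δ(N,m) ≥ ((N−m)/(N−1))·Δ(N−1,m) + (m/(N−1))·Δ(N−1,m−1) − (1/(N−1))·Δ(N−1,m) for all 2 ≤ N and 1 ≤ m ≤ N−1, together with Δ(2,1) = c for some c > 0. Then Δ(N,m) ≥ c·m/(N−1) for all N ≥ 2 and 1 ≤ m ≤ N−1. -/
/-- If Δ(N,0) = 0, Δ(2,1) = c > 0, and Δ satisfies the recursive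
inequality Δ(N,m) ≥ ((N−m)/(N−1))Δ(N−1,m) + (m/(N−1))Δ(N−1,m−1) − (1/(N−1))Δ(N−1,m)
for 2 ≤ N, 1 ≤ m ≤ N−1, then Δ(N,m) ≥ c·m/(N−1) for all N ≥ 2, 1 ≤ m ≤ N−1. -/
theorem gap_lower_bound_recursion (Δ : ℕ → ℕ → ℝ) (c : ℝ) (hc : 0 < c)
    (hzero : ∀ N : ℕ, Δ N 0 = 0)
    (hbase : Δ 2 1 = c)
    (hrec : ∀ N m : ℕ, 2 ≤ N → 1 ≤ m → m ≤ N - 1 →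
      Δ N m ≥ ((N - m : ℝ) / (N - 1)) * Δ (N - 1) m
        + ((m : ℝ) / (N - 1)) * Δ (N - 1) (m - 1)
        - (1 / (N - 1 : ℝ)) * Δ (N - 1) m) :
    ∀ N m : ℕ, 2 ≤ N → 1 ≤ m → m ≤ N - 1 → Δ N m ≥ c * m / (N - 1 : ℝ) := by
  intro N
  induction N using Nat.strong_induction_on with
  | _ N ih =>
    intro m hN hm hmN
    match N, hN, hmN with
    | 2, _, hmN =>
      interval_cases m
      · norm_num [hbase]
    | (n+3), _, hmN =>
      have hn1 : (0:ℝ) < (n:ℝ) + 1 := by positivity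
      have hn2 : (0:ℝ) < (n:ℝ) + 2 := by positivity
      have ih2 : ∀ k : ℕ, 1 ≤ k → k ≤ n + 1 → Δ (n+2) k ≥ c * k / ((n:ℝ) + 1) := by
        intro k h1 h2
        have := ih (n+2) (by omega) k (by omega) h1 (by omega)
        have hc2 : ((n+2:ℕ):ℝ) - 1 = (n:ℝ) + 1 := by push_cast; ring
        rwa [hc2] at this
      have hr : Δ (n+3) m ≥ (((n+3:ℕ):ℝ) - m) / (((n+3:ℕ):ℝ) - 1) * Δ (n+2) m
          + (m:ℝ) / (((n+3:ℕ):ℝ) - 1) * Δ (n+2) (m-1)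
          - 1 / (((n+3:ℕ):ℝ) - 1) * Δ (n+2) m := hrec (n+3) m (by omega) hm (by omega)
      have hc3 : ((n+3:ℕ):ℝ) - 1 = (n:ℝ) + 2 := by push_cast; ring
      have hc4 : ((n+3:ℕ):ℝ) = (n:ℝ) + 3 := by push_cast; ring
      rw [hc3, hc4] at hr
      have hmle : m ≤ n + 2 := by omega
      rcases eq_or_lt_of_le hmle with heq | hlt
      · -- m = n + 2 : top case
        subst heq
        have hx : Δ (n+2) (n+1) ≥ c * (n+1) / ((n:ℝ)+1) := by
          have := ih2 (n+1) (by omega) (le_refl _)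
          push_cast at this
          linarith
        have hcast : ((n+2:ℕ):ℝ) = (n:ℝ) + 2 := by push_cast; ring
        have hsub : (n + 2) - 1 = n + 1 := by omega
        rw [hcast, hsub] at hr
        have hy : c * ((n:ℝ)+1) / ((n:ℝ)+1) = c := by field_simp
        have e : ((n:ℝ)+3 - ((n:ℝ)+2)) / ((n:ℝ)+2) * Δ (n+2) (n+2)
            + ((n:ℝ)+2) / ((n:ℝ)+2) * Δ (n+2) (n+1)
            - 1 / ((n:ℝ)+2) * Δ (n+2) (n+2) = Δ (n+2) (n+1) := by
          field_simp
          ring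
        rw [e] at hr
        rw [hc3, hcast]
        rw [hy] at hx
        rw [ge_iff_le, div_le_iff₀ hn2]
        nlinarith
      · -- m ≤ n + 1
        have hm1 : m ≤ n + 1 := by omega
        have h1 : Δ (n+2) m ≥ c * m / ((n:ℝ)+1) := ih2 m hm hm1
        have h2 : Δ (n+2) (m-1) ≥ c * ((m:ℝ) - 1) / ((n:ℝ)+1) := by
          rcases Nat.eq_or_lt_of_le hm with h | h
          · have : m = 1 := h.symm
            subst this
            simp [hzero]
          · have := ih2 (m-1) (by omega) (by omega)
            have hcm : ((m-1:ℕ):ℝ) = (m:ℝ) - 1 := by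
              push_cast [Nat.cast_sub hm]; ring
            rwa [hcm] at this
        set x := Δ (n+2) m with hxdef
        set y := Δ (n+2) (m-1) with hydef
        have hmr : (m:ℝ) ≤ (n:ℝ) + 1 := by exact_mod_cast hm1
        have hmr1 : (1:ℝ) ≤ (m:ℝ) := by exact_mod_cast hm
        have t1 : ((n:ℝ)+2-m) * (c*m/((n:ℝ)+1)) ≤ ((n:ℝ)+2-m) * x :=
          mul_le_mul_of_nonneg_left h1 (by linarith)
        have t2 : (m:ℝ) * (c*((m:ℝ)-1)/((n:ℝ)+1)) ≤ (m:ℝ) * y :=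
          mul_le_mul_of_nonneg_left h2 (by linarith)
        have e1 : ((n:ℝ)+2-m) * (c*m/((n:ℝ)+1)) + (m:ℝ) * (c*((m:ℝ)-1)/((n:ℝ)+1))
            = c * m := by field_simp; ring
        have key : ((n:ℝ)+2-m) * x + m * y ≥ c * m := by linarith
        have e2 : ((n:ℝ)+3 - m) / ((n:ℝ)+2) * x + (m:ℝ) / ((n:ℝ)+2) * y
            - 1 / ((n:ℝ)+2) * x = (((n:ℝ)+2-m) * x + m * y) / ((n:ℝ)+2) := by
          field_simp; ring
        rw [e2] at hr
        rw [hc3, ge_iff_le, div_le_iff₀ hn2]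
        rw [ge_iff_le, div_le_iff₀ hn2] at hr
        linarith
end

section
/- Let g(v) = (2π)^{−1/2}e^{−v²/2}, and define R₁f(v₁,v₂) := g(v₁)∫f(w,v₂)dw, Q₁₂f(v₁,v₂) := (1/2π)∫₀^{2π} f(v₁cosθ + v₂sinθ, −v₁sinθ + v₂cosθ)dθ, and let U₂ be the operator U acting in the variable v₂, where (Uφ)(v) := ∫dw (1/2π)∫₀^{2π} φ(v cosθ + w sinθ)·g(−v sinθ + w cosθ)dθ. Then R₁Q₁₂R₁ = R₁U₂ = U₂R₁ as operators on L¹(ℝ²). -/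
open Real MeasureTheory Set Filter Function
open scoped ENNReal NNReal
set_option maxHeartbeats 1000000

noncomputable section

namespace SKSW

def g0 : ℝ → ℝ := fun v => (1 / Real.sqrt (2 * π)) * Real.exp (-v ^ 2 / 2)

lemma g0_cont : Continuous g0 := by unfold g0; fun_prop

lemma g0_integrable : Integrable g0 := by
  have h : Integrable (fun v : ℝ => Real.exp (-(1/2 : ℝ) * v ^ 2)) :=
    integrable_exp_neg_mul_sq (by norm_num)
  have h2 := h.const_mul (1 / Real.sqrt (2 * π))
  refine h2.congr (Eventually.of_forall fun v => ?_)
  unfold g0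
  norm_num [neg_div]
  left
  ring_nf

def μθ : Measure ℝ := volume.restrict (Set.Ioc 0 (2*π))

instance : SFinite μθ := by unfold μθ; infer_instance

instance : IsFiniteMeasure μθ := by
  unfold μθ
  exact ⟨by simp [Real.volume_Ioc]; exact ENNReal.mul_lt_top (by norm_num) ENNReal.ofReal_lt_top⟩

lemma map_affine {a : ℝ} (ha : a ≠ 0) (b : ℝ) :
    Measure.map (fun x : ℝ => a * x + b) volume = ENNReal.ofReal |a|⁻¹ • volume := by
  have h : (fun x : ℝ => a * x + b) = (fun y : ℝ => y + b) ∘ (fun x : ℝ => a * x) := rfl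
  rw [h, ← Measure.map_map (measurable_add_const b) (measurable_const_mul a)]
  have h2 : Measure.map (fun x : ℝ => a * x) volume = ENNReal.ofReal |a⁻¹| • volume :=
    Real.map_volume_mul_left ha
  rw [h2, Measure.map_smul]
  have h3 : Measure.map (fun y : ℝ => y + b) volume = volume := map_add_right_eq_self volume b
  rw [h3, abs_inv]

lemma lintegral_affine {φ : ℝ → ℝ≥0∞} (hφ : Measurable φ) {a : ℝ} (ha : a ≠ 0) (b : ℝ) :
    (∫⁻ x : ℝ, φ (a * x + b)) = ENNReal.ofReal |a|⁻¹ * ∫⁻ y, φ y := by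
  rw [← lintegral_map hφ (by fun_prop : Measurable fun x : ℝ => a * x + b),
    map_affine ha b, lintegral_smul_measure, smul_eq_mul]

lemma affine_null {a : ℝ} (ha : a ≠ 0) (b : ℝ) {N : Set ℝ} (hN : MeasurableSet N)
    (h0 : volume N = 0) : volume {u : ℝ | a * u + b ∈ N} = 0 := by
  have h : {u : ℝ | a * u + b ∈ N} = (fun u : ℝ => a * u + b) ⁻¹' N := rfl
  rw [h, ← Measure.map_apply (by fun_prop) hN, map_affine ha b]
  simp [h0]




lemma key_vu (Fe Ge : ℝ → ℝ≥0∞) (hF : Measurable Fe) (hG : Measurable Ge)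
    {c s : ℝ} (hs : s ≠ 0) (h1 : c ^ 2 + s ^ 2 = 1) :
    (∫⁻ v : ℝ, ∫⁻ u : ℝ, Fe (v * c + u * s) * Ge (-v * s + u * c)) =
      (∫⁻ y, Fe y) * ∫⁻ z, Ge z := by
  have habs : ENNReal.ofReal |s|⁻¹ * ENNReal.ofReal |s| = 1 := by
    rw [← ENNReal.ofReal_mul (by positivity), inv_mul_cancel₀ (abs_ne_zero.mpr hs),
      ENNReal.ofReal_one]
  have step1 : ∀ v : ℝ, (∫⁻ u : ℝ, Fe (v * c + u * s) * Ge (-v * s + u * c))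
      = ENNReal.ofReal |s|⁻¹ * ∫⁻ y, Fe y * Ge ((c * y - v) / s) := by
    intro v
    have hφ : Measurable fun y : ℝ => Fe y * Ge ((c * y - v) / s) := by fun_prop
    rw [← lintegral_affine hφ hs (v * c)]
    refine lintegral_congr fun u => ?_
    have e1 : s * u + v * c = v * c + u * s := by ring
    have e2 : (c * (s * u + v * c) - v) / s = -v * s + u * c := by
      rw [div_eq_iff hs]; linear_combination v * h1
    rw [e2, e1]
  calc (∫⁻ v : ℝ, ∫⁻ u : ℝ, Fe (v * c + u * s) * Ge (-v * s + u * c))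
      = ∫⁻ v : ℝ, ENNReal.ofReal |s|⁻¹ * ∫⁻ y, Fe y * Ge ((c * y - v) / s) :=
        lintegral_congr step1
    _ = ENNReal.ofReal |s|⁻¹ * ∫⁻ v : ℝ, ∫⁻ y, Fe y * Ge ((c * y - v) / s) := by
        rw [lintegral_const_mul]
        exact (by fun_prop : Measurable fun p : ℝ × ℝ => Fe p.2 * Ge ((c * p.2 - p.1) / s)).lintegral_prod_right'
    _ = ENNReal.ofReal |s|⁻¹ * ∫⁻ y : ℝ, ∫⁻ v : ℝ, Fe y * Ge ((c * y - v) / s) := by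
        rw [lintegral_lintegral_swap]
        exact (by fun_prop : Measurable fun p : ℝ × ℝ => Fe p.2 * Ge ((c * p.2 - p.1) / s)).aemeasurable
    _ = ENNReal.ofReal |s|⁻¹ * ∫⁻ y : ℝ, Fe y * (ENNReal.ofReal |s| * ∫⁻ z, Ge z) := by
        congr 1
        refine lintegral_congr fun y => ?_
        rw [lintegral_const_mul _ (by fun_prop : Measurable fun v : ℝ => Ge ((c * y - v) / s))]
        congr 1
        have e3 : ∀ v : ℝ, (c * y - v) / s = (-s⁻¹) * v + c * y / s := by
          intro v; field_simp; ring
        simp_rw [e3]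
        rw [lintegral_affine hG (by simpa using hs) (c * y / s)]
        congr 1
        rw [abs_neg, abs_inv, inv_inv]
    _ = (∫⁻ y, Fe y) * ∫⁻ z, Ge z := by
        rw [lintegral_mul_const _ hF, ← mul_assoc, mul_comm _ (∫⁻ y, Fe y), mul_assoc,
          ← mul_assoc (ENNReal.ofReal |s|⁻¹) (ENNReal.ofReal |s|), habs, one_mul]

lemma sin_ne_ae : ∀ᵐ θ : ℝ ∂μθ, Real.sin θ ≠ 0 := by
  have hc : Set.Countable {θ : ℝ | Real.sin θ = 0} := by
    have hsub : {θ : ℝ | Real.sin θ = 0} ⊆ Set.range (fun n : ℤ => (n : ℝ) * π) := by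
      intro θ hθ
      rcases Real.sin_eq_zero_iff.mp hθ with ⟨n, hn⟩
      exact ⟨n, hn⟩
    exact (Set.countable_range _).mono hsub
  have h0 : volume {θ : ℝ | Real.sin θ = 0} = 0 := hc.measure_zero _
  refine ae_restrict_of_ae ?_
  rw [ae_iff]
  simpa using h0

lemma fin_ae {f' : ℝ × ℝ → ℝ} (hm : Measurable f') (hfi : HasFiniteIntegral f') :
    ∀ᵐ v : ℝ ∂(volume : Measure ℝ), (∫⁻ w : ℝ, ∫⁻ u : ℝ, ∫⁻ θ, (‖f' (w, v * Real.cos θ + u * Real.sin θ)‖₊ : ℝ≥0∞) *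
      (‖g0 (-v * Real.sin θ + u * Real.cos θ)‖₊ : ℝ≥0∞) ∂μθ) < ⊤ := by
  set Fe : ℝ × ℝ → ℝ≥0∞ := fun p => (‖f' p‖₊ : ℝ≥0∞) with hFe_def
  set Ge : ℝ → ℝ≥0∞ := fun z => (‖g0 z‖₊ : ℝ≥0∞) with hGe_def
  have hFe : Measurable Fe := hm.nnnorm.coe_nnreal_ennreal
  have hGe : Measurable Ge := g0_cont.measurable.nnnorm.coe_nnreal_ennreal
  set A : ℝ → ℝ → ℝ → ℝ → ℝ≥0∞ := fun v w u θ =>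
      Fe (w, v * Real.cos θ + u * Real.sin θ) * Ge (-v * Real.sin θ + u * Real.cos θ)
    with hA_def
  have hA : Measurable (fun x : ℝ × ℝ × ℝ × ℝ => A x.1 x.2.1 x.2.2.1 x.2.2.2) := by
    apply Measurable.fun_mul
    · exact hFe.comp (by fun_prop)
    · exact hGe.comp (by fun_prop)
  have h1 : ∀ v w : ℝ, Measurable (fun p : ℝ × ℝ => A v w p.1 p.2) :=
    fun v w => hA.comp (by fun_prop : Measurable fun p : ℝ × ℝ => (v, w, p.1, p.2))
  have h2 : ∀ v : ℝ, Measurable (fun p : (ℝ × ℝ) × ℝ => A v p.1.1 p.2 p.1.2) :=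
    fun v => hA.comp (by fun_prop : Measurable fun p : (ℝ × ℝ) × ℝ => (v, p.1.1, p.2, p.1.2))
  have h3 : Measurable (fun p : ((ℝ × ℝ) × ℝ) × ℝ => A p.1.1.1 p.2 p.1.2 p.1.1.2) :=
    hA.comp (by fun_prop : Measurable fun p : ((ℝ × ℝ) × ℝ) × ℝ => (p.1.1.1, p.2, p.1.2, p.1.1.2))
  have h4 : Measurable (fun p : ((ℝ × ℝ) × ℝ) × ℝ => A p.1.1.1 p.1.1.2 p.1.2 p.2) :=
    hA.comp (by fun_prop : Measurable fun p : ((ℝ × ℝ) × ℝ) × ℝ => (p.1.1.1, p.1.1.2, p.1.2, p.2))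
  set I : ℝ → ℝ≥0∞ := fun v => ∫⁻ w : ℝ, ∫⁻ u : ℝ, ∫⁻ θ, A v w u θ ∂μθ with hI_def
  have hImeas : Measurable I := by
    apply Measurable.lintegral_prod_right'
      (f := fun p : ℝ × ℝ => ∫⁻ u : ℝ, ∫⁻ θ, A p.1 p.2 u θ ∂μθ)
    apply Measurable.lintegral_prod_right'
      (f := fun p : (ℝ × ℝ) × ℝ => ∫⁻ θ, A p.1.1 p.1.2 p.2 θ ∂μθ)
    exact Measurable.lintegral_prod_right' h4
  -- rearrange the integral of I
  have step1 : ∀ v : ℝ, I v = ∫⁻ θ, (∫⁻ w : ℝ, ∫⁻ u : ℝ, A v w u θ) ∂μθ := by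
    intro v
    have e1 : ∀ w : ℝ, (∫⁻ u : ℝ, ∫⁻ θ, A v w u θ ∂μθ)
        = ∫⁻ θ, (∫⁻ u : ℝ, A v w u θ) ∂μθ :=
      fun w => lintegral_lintegral_swap (h1 v w).aemeasurable
    rw [hI_def]
    simp only [e1]
    exact lintegral_lintegral_swap ((h2 v).lintegral_prod_right').aemeasurable
  have hG : (∫⁻ z, Ge z) ≠ ⊤ := g0_integrable.2.ne
  have hF : (∫⁻ p, Fe p) ≠ ⊤ := hfi.ne
  have h5 : Measurable (fun p : ((ℝ × ℝ) × ℝ) × ℝ => A p.1.1.1 p.1.2 p.2 p.1.1.2) :=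
    hA.comp (by fun_prop : Measurable fun p : ((ℝ × ℝ) × ℝ) × ℝ => (p.1.1.1, p.1.2, p.2, p.1.1.2))
  have h6 : ∀ θ : ℝ, Measurable (fun p : (ℝ × ℝ) × ℝ => A p.1.1 p.1.2 p.2 θ) :=
    fun θ => hA.comp (by fun_prop : Measurable fun p : (ℝ × ℝ) × ℝ => (p.1.1, p.1.2, p.2, θ))
  have step2 : (∫⁻ v : ℝ, I v) = ∫⁻ θ, (∫⁻ w : ℝ, ∫⁻ v : ℝ, ∫⁻ u : ℝ, A v w u θ) ∂μθ := by
    simp only [step1]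
    rw [lintegral_lintegral_swap (h5.lintegral_prod_right').lintegral_prod_right'.aemeasurable]
    refine lintegral_congr fun θ => ?_
    exact lintegral_lintegral_swap ((h6 θ).lintegral_prod_right').aemeasurable
  have hμθ : μθ Set.univ ≠ ⊤ := by
    unfold μθ; rw [Measure.restrict_apply_univ]; simp [Real.volume_Ioc]
    exact ENNReal.mul_ne_top (by norm_num) ENNReal.ofReal_ne_top
  have step3 : (∫⁻ v : ℝ, I v) ≠ ⊤ := by
    rw [step2]
    have hbound : ∀ᵐ θ ∂μθ, (∫⁻ w : ℝ, ∫⁻ v : ℝ, ∫⁻ u : ℝ, A v w u θ)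
        = (∫⁻ p : ℝ × ℝ, Fe p) * ∫⁻ z, Ge z := by
      filter_upwards [sin_ne_ae] with θ hθ
      have e : ∀ w : ℝ, (∫⁻ v : ℝ, ∫⁻ u : ℝ, A v w u θ) = (∫⁻ y, Fe (w, y)) * ∫⁻ z, Ge z :=
        fun w => key_vu (fun y => Fe (w, y)) Ge (hFe.comp (by fun_prop)) hGe hθ
          (Real.cos_sq_add_sin_sq θ)
      simp only [e]
      rw [lintegral_mul_const _ hFe.lintegral_prod_right', ← lintegral_prod _ hFe.aemeasurable,
        ← Measure.volume_eq_prod ℝ ℝ]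
    rw [lintegral_congr_ae hbound, lintegral_const]
    exact ENNReal.mul_ne_top (ENNReal.mul_ne_top hF hG) hμθ
  exact ae_lt_top hImeas step3

lemma qmp_S (v : ℝ) : Measure.QuasiMeasurePreserving
    (fun q : ℝ × ℝ => v * Real.cos q.2 + q.1 * Real.sin q.2) (volume.prod μθ) volume := by
  have hSm : Measurable (fun q : ℝ × ℝ => v * Real.cos q.2 + q.1 * Real.sin q.2) := by fun_prop
  refine ⟨hSm, ?_⟩
  refine Measure.AbsolutelyContinuous.mk fun N hN h0 => ?_
  rw [Measure.map_apply hSm hN, Measure.prod_apply_symm (hSm hN)]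
  have hz : ∀ᵐ θ ∂μθ, volume ((fun u : ℝ => (u, θ)) ⁻¹'
      ((fun q : ℝ × ℝ => v * Real.cos q.2 + q.1 * Real.sin q.2) ⁻¹' N)) = 0 := by
    filter_upwards [sin_ne_ae] with θ hθ
    have hset : ((fun u : ℝ => (u, θ)) ⁻¹'
        ((fun q : ℝ × ℝ => v * Real.cos q.2 + q.1 * Real.sin q.2) ⁻¹' N))
        = {u : ℝ | Real.sin θ * u + v * Real.cos θ ∈ N} := by
      ext u
      have harg : v * Real.cos θ + u * Real.sin θ = Real.sin θ * u + v * Real.cos θ := by ring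
      simp only [Set.mem_preimage, Set.mem_setOf_eq, harg]
    rw [hset]
    exact affine_null hθ _ hN h0
  rw [lintegral_congr_ae hz, lintegral_zero]

lemma qmp_T (v : ℝ) : Measure.QuasiMeasurePreserving
    (fun q : ℝ × (ℝ × ℝ) => (q.1, v * Real.cos q.2.2 + q.2.1 * Real.sin q.2.2))
    (volume.prod (volume.prod μθ)) (volume : Measure (ℝ × ℝ)) := by
  have hSm : Measurable (fun q : ℝ × ℝ => v * Real.cos q.2 + q.1 * Real.sin q.2) := by fun_prop
  refine ⟨by fun_prop, ?_⟩
  have heq : (fun q : ℝ × (ℝ × ℝ) => (q.1, v * Real.cos q.2.2 + q.2.1 * Real.sin q.2.2))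
      = Prod.map (id : ℝ → ℝ) (fun q : ℝ × ℝ => v * Real.cos q.2 + q.1 * Real.sin q.2) := rfl
  rw [heq, ← Measure.map_prod_map _ _ measurable_id hSm, Measure.map_id,
    Measure.volume_eq_prod ℝ ℝ]
  exact (Measure.AbsolutelyContinuous.refl volume).prod (qmp_S v).absolutelyContinuous

lemma swap_ae (f : ℝ × ℝ → ℝ) (hf : Integrable f) :
    ∀ᵐ v : ℝ ∂(volume : Measure ℝ),
      (∫ w : ℝ, ∫ u : ℝ, (1 / (2 * π)) * ∫ θ in (0:ℝ)..(2 * π),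
          f (w, v * Real.cos θ + u * Real.sin θ) * g0 (-v * Real.sin θ + u * Real.cos θ))
        = ∫ u : ℝ, (1 / (2 * π)) * ∫ θ in (0:ℝ)..(2 * π),
          (∫ w : ℝ, f (w, v * Real.cos θ + u * Real.sin θ)) *
            g0 (-v * Real.sin θ + u * Real.cos θ) := by
  have h2π : (0:ℝ) ≤ 2 * π := by positivity
  set f' : ℝ × ℝ → ℝ := hf.1.mk f with hf'def
  have hf'sm : StronglyMeasurable f' := hf.1.stronglyMeasurable_mk
  have hff' : f =ᵐ[volume] f' := hf.1.ae_eq_mk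
  have hf'int : Integrable f' := hf.congr hff'
  filter_upwards [fin_ae hf'sm.measurable hf'int.2] with v hv
  have hTq := qmp_T v
  have hZc : Continuous fun q : ℝ × (ℝ × ℝ) =>
      -v * Real.sin q.2.2 + q.2.1 * Real.cos q.2.2 := by fun_prop
  have hΦsm : AEStronglyMeasurable
      (fun q : ℝ × (ℝ × ℝ) => f (q.1, v * Real.cos q.2.2 + q.2.1 * Real.sin q.2.2) *
        g0 (-v * Real.sin q.2.2 + q.2.1 * Real.cos q.2.2))
      (volume.prod (volume.prod μθ)) :=
    (hf.1.comp_quasiMeasurePreserving hTq).mul ((g0_cont.comp hZc).aestronglyMeasurable)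
  have haeT : (fun q : ℝ × (ℝ × ℝ) => f (q.1, v * Real.cos q.2.2 + q.2.1 * Real.sin q.2.2))
      =ᵐ[volume.prod (volume.prod μθ)]
      (fun q : ℝ × (ℝ × ℝ) => f' (q.1, v * Real.cos q.2.2 + q.2.1 * Real.sin q.2.2)) :=
    hTq.ae_eq_comp hff'
  have hmeas' : Measurable fun q : ℝ × (ℝ × ℝ) =>
      (‖f' (q.1, v * Real.cos q.2.2 + q.2.1 * Real.sin q.2.2)‖₊ : ℝ≥0∞) *
      (‖g0 (-v * Real.sin q.2.2 + q.2.1 * Real.cos q.2.2)‖₊ : ℝ≥0∞) := by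
    apply Measurable.fun_mul
    · exact hf'sm.measurable.nnnorm.coe_nnreal_ennreal.comp (by fun_prop)
    · exact g0_cont.measurable.nnnorm.coe_nnreal_ennreal.comp hZc.measurable
  have hΦfin : HasFiniteIntegral
      (fun q : ℝ × (ℝ × ℝ) => f (q.1, v * Real.cos q.2.2 + q.2.1 * Real.sin q.2.2) *
        g0 (-v * Real.sin q.2.2 + q.2.1 * Real.cos q.2.2)) (volume.prod (volume.prod μθ)) := by
    rw [hasFiniteIntegral_def]
    simp only [enorm_eq_nnnorm]
    have e1 : (∫⁻ q, (‖f (q.1, v * Real.cos q.2.2 + q.2.1 * Real.sin q.2.2) *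
          g0 (-v * Real.sin q.2.2 + q.2.1 * Real.cos q.2.2)‖₊ : ℝ≥0∞)
          ∂(volume.prod (volume.prod μθ)))
        = ∫⁻ q, (‖f' (q.1, v * Real.cos q.2.2 + q.2.1 * Real.sin q.2.2)‖₊ : ℝ≥0∞) *
          (‖g0 (-v * Real.sin q.2.2 + q.2.1 * Real.cos q.2.2)‖₊ : ℝ≥0∞)
          ∂(volume.prod (volume.prod μθ)) := by
      refine lintegral_congr_ae ?_
      filter_upwards [haeT] with q hq
      simp only [nnnorm_mul, ENNReal.coe_mul, hq]
    rw [e1, lintegral_prod _ hmeas'.aemeasurable]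
    have e2 : ∀ w : ℝ, (∫⁻ y, (‖f' (w, v * Real.cos y.2 + y.1 * Real.sin y.2)‖₊ : ℝ≥0∞) *
          (‖g0 (-v * Real.sin y.2 + y.1 * Real.cos y.2)‖₊ : ℝ≥0∞) ∂(volume.prod μθ))
        = ∫⁻ u : ℝ, ∫⁻ θ : ℝ, (‖f' (w, v * Real.cos θ + u * Real.sin θ)‖₊ : ℝ≥0∞) *
          (‖g0 (-v * Real.sin θ + u * Real.cos θ)‖₊ : ℝ≥0∞) ∂μθ := by
      intro w
      exact lintegral_prod _ (hmeas'.comp (by fun_prop :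
        Measurable fun y : ℝ × ℝ => ((w, y) : ℝ × (ℝ × ℝ)))).aemeasurable
    simp only [e2]
    exact hv
  have hΦint : Integrable
      (fun q : ℝ × (ℝ × ℝ) => f (q.1, v * Real.cos q.2.2 + q.2.1 * Real.sin q.2.2) *
        g0 (-v * Real.sin q.2.2 + q.2.1 * Real.cos q.2.2)) (volume.prod (volume.prod μθ)) :=
    ⟨hΦsm, hΦfin⟩
  have hint : ∀ (h : ℝ → ℝ), (∫ θ in (0:ℝ)..(2 * π), h θ) = ∫ θ, h θ ∂μθ :=
    fun h => intervalIntegral.integral_of_le h2π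
  simp only [hint, integral_const_mul]
  congr 1
  -- now the pure Fubini statement
  calc (∫ w : ℝ, ∫ u : ℝ, ∫ θ, f (w, v * Real.cos θ + u * Real.sin θ) *
          g0 (-v * Real.sin θ + u * Real.cos θ) ∂μθ)
      = ∫ w : ℝ, ∫ y, f (w, v * Real.cos y.2 + y.1 * Real.sin y.2) *
          g0 (-v * Real.sin y.2 + y.1 * Real.cos y.2) ∂(volume.prod μθ) := by
        refine integral_congr_ae ?_
        filter_upwards [hΦint.prod_right_ae] with w hw
        exact (integral_prod _ hw).symm
    _ = ∫ y, (∫ w : ℝ, f (w, v * Real.cos y.2 + y.1 * Real.sin y.2) *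
          g0 (-v * Real.sin y.2 + y.1 * Real.cos y.2)) ∂(volume.prod μθ) :=
        integral_integral_swap hΦint
    _ = ∫ y, (∫ w : ℝ, f (w, v * Real.cos y.2 + y.1 * Real.sin y.2)) *
          g0 (-v * Real.sin y.2 + y.1 * Real.cos y.2) ∂(volume.prod μθ) := by
        refine integral_congr_ae (Eventually.of_forall fun y => ?_)
        exact integral_mul_const _ _
    _ = ∫ u : ℝ, ∫ θ, (∫ w : ℝ, f (w, v * Real.cos θ + u * Real.sin θ)) *
          g0 (-v * Real.sin θ + u * Real.cos θ) ∂μθ := by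
        refine integral_prod _ (hΦint.integral_prod_right.congr ?_)
        refine Eventually.of_forall fun y => ?_
        show (∫ w : ℝ, f (w, v * Real.cos y.2 + y.1 * Real.sin y.2) *
            g0 (-v * Real.sin y.2 + y.1 * Real.cos y.2))
          = (∫ w : ℝ, f (w, v * Real.cos y.2 + y.1 * Real.sin y.2)) *
            g0 (-v * Real.sin y.2 + y.1 * Real.cos y.2)
        exact integral_mul_const _ _

lemma hpull (K : ℝ) (H : ℝ → ℝ → ℝ) :
    (∫ u : ℝ, (1 / (2 * π)) * ∫ θ in (0:ℝ)..(2 * π), K * H u θ)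
      = K * ∫ u : ℝ, (1 / (2 * π)) * ∫ θ in (0:ℝ)..(2 * π), H u θ := by
  have e : ∀ u : ℝ, (1 / (2 * π)) * (∫ θ in (0:ℝ)..(2 * π), K * H u θ)
      = K * ((1 / (2 * π)) * ∫ θ in (0:ℝ)..(2 * π), H u θ) := by
    intro u
    rw [intervalIntegral.integral_const_mul]
    ring
  simp only [e]
  exact integral_const_mul K _

end SKSW

open SKSW in
/-- With g the standard Gaussian density, R₁ the Maxwellian (strong)
thermostat on the first variable, Q₁₂ the Kac rotation average, and U₂ the weak
thermostat acting on the second variable, one has R₁Q₁₂R₁ = R₁U₂ = U₂R₁ as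
operators on L¹(ℝ²) (i.e. almost everywhere, for every integrable f). -/
theorem strong_kac_strong_eq_weak (f : ℝ × ℝ → ℝ) (hf : Integrable f) :
    let g : ℝ → ℝ := fun v => (1 / Real.sqrt (2 * π)) * Real.exp (-v ^ 2 / 2)
    let R₁ : (ℝ × ℝ → ℝ) → (ℝ × ℝ → ℝ) := fun u p => g p.1 * ∫ w : ℝ, u (w, p.2)
    let Q₁₂ : (ℝ × ℝ → ℝ) → (ℝ × ℝ → ℝ) := fun u p =>
      (1 / (2 * π)) * ∫ θ in (0:ℝ)..(2 * π),
        u (p.1 * Real.cos θ + p.2 * Real.sin θ, -p.1 * Real.sin θ + p.2 * Real.cos θ)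
    let U₂ : (ℝ × ℝ → ℝ) → (ℝ × ℝ → ℝ) := fun u p =>
      ∫ w : ℝ, (1 / (2 * π)) * ∫ θ in (0:ℝ)..(2 * π),
        u (p.1, p.2 * Real.cos θ + w * Real.sin θ) * g (-p.2 * Real.sin θ + w * Real.cos θ)
    (R₁ (Q₁₂ (R₁ f)) =ᵐ[volume] R₁ (U₂ f)) ∧ (R₁ (U₂ f) =ᵐ[volume] U₂ (R₁ f)) := by
  intro g R₁ Q₁₂ U₂
  have hsnd : ∀ᵐ p : ℝ × ℝ ∂volume,
      (∫ w : ℝ, ∫ u : ℝ, (1 / (2 * π)) * ∫ θ in (0:ℝ)..(2 * π),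
          f (w, p.2 * Real.cos θ + u * Real.sin θ) * g0 (-p.2 * Real.sin θ + u * Real.cos θ))
        = ∫ u : ℝ, (1 / (2 * π)) * ∫ θ in (0:ℝ)..(2 * π),
          (∫ w : ℝ, f (w, p.2 * Real.cos θ + u * Real.sin θ)) *
            g0 (-p.2 * Real.sin θ + u * Real.cos θ) := by
    rw [Measure.volume_eq_prod ℝ ℝ]
    exact Measure.quasiMeasurePreserving_snd.ae (swap_ae f hf)
  have key2 : R₁ (U₂ f) =ᵐ[volume] U₂ (R₁ f) := by
    filter_upwards [hsnd] with p hp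
    show g0 p.1 * (∫ w : ℝ, ∫ u : ℝ, (1 / (2 * π)) * ∫ θ in (0:ℝ)..(2 * π),
        f (w, p.2 * Real.cos θ + u * Real.sin θ) * g0 (-p.2 * Real.sin θ + u * Real.cos θ))
      = ∫ u : ℝ, (1 / (2 * π)) * ∫ θ in (0:ℝ)..(2 * π),
        (g0 p.1 * ∫ w : ℝ, f (w, p.2 * Real.cos θ + u * Real.sin θ)) *
          g0 (-p.2 * Real.sin θ + u * Real.cos θ)
    simp only [mul_assoc]
    rw [hpull, hp]
  refine ⟨?_, key2⟩
  have eq1 : R₁ (Q₁₂ (R₁ f)) = U₂ (R₁ f) := by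
    funext p
    show g0 p.1 * (∫ w : ℝ, (1 / (2 * π)) * ∫ θ in (0:ℝ)..(2 * π),
        g0 (w * Real.cos θ + p.2 * Real.sin θ) *
          ∫ w' : ℝ, f (w', -w * Real.sin θ + p.2 * Real.cos θ))
      = ∫ u : ℝ, (1 / (2 * π)) * ∫ θ in (0:ℝ)..(2 * π),
        (g0 p.1 * ∫ w : ℝ, f (w, p.2 * Real.cos θ + u * Real.sin θ)) *
          g0 (-p.2 * Real.sin θ + u * Real.cos θ)
    have refl1 : ∀ w : ℝ, (∫ θ in (0:ℝ)..(2 * π),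
        g0 (w * Real.cos θ + p.2 * Real.sin θ) *
          ∫ w' : ℝ, f (w', -w * Real.sin θ + p.2 * Real.cos θ))
        = ∫ θ in (0:ℝ)..(2 * π),
          (∫ w' : ℝ, f (w', p.2 * Real.cos θ + w * Real.sin θ)) *
            g0 (-p.2 * Real.sin θ + w * Real.cos θ) := by
      intro w
      have h := intervalIntegral.integral_comp_sub_left (a := (0:ℝ)) (b := 2 * π)
        (fun θ => g0 (w * Real.cos θ + p.2 * Real.sin θ) *
          ∫ w' : ℝ, f (w', -w * Real.sin θ + p.2 * Real.cos θ)) (2 * π)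
      rw [sub_self, sub_zero] at h
      rw [← h]
      refine intervalIntegral.integral_congr fun θ _ => ?_
      show g0 (w * Real.cos (2 * π - θ) + p.2 * Real.sin (2 * π - θ)) *
          (∫ w' : ℝ, f (w', -w * Real.sin (2 * π - θ) + p.2 * Real.cos (2 * π - θ)))
        = (∫ w' : ℝ, f (w', p.2 * Real.cos θ + w * Real.sin θ)) *
            g0 (-p.2 * Real.sin θ + w * Real.cos θ)
      rw [Real.cos_two_pi_sub, Real.sin_two_pi_sub,
        show w * Real.cos θ + p.2 * -Real.sin θ = -p.2 * Real.sin θ + w * Real.cos θ by ring,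
        show -w * -Real.sin θ + p.2 * Real.cos θ = p.2 * Real.cos θ + w * Real.sin θ by ring,
        mul_comm]
    simp only [refl1]
    simp only [mul_assoc]
    rw [hpull]
  rw [eq1]
  exact key2.symm
end
end

section
/- (Han's inequality, continuous version, N = 2, symmetric case) Let γ(v₁,v₂) = g(v₁)g(v₂) be a product probability density on ℝ², and let h ≥ 0 with ∫hγ = 1 be symmetric in (v₁,v₂). Let P₁h(v₂) = ∫h(w,v₂)g(w)dw. Then S(P₁h) ≤ (1/2)S(h), where S(u) = ∫ u log u γ. -/
/-!
Han's inequality for two variables is superadditivity of relative entropy with respect to a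
product reference measure: `D(F ‖ g₁ ⊗ g₂) = D(M₁ ‖ g₁) + D(M₂ ‖ g₂) + D(F ‖ M₁ ⊗ M₂)` for a
density `F` with marginals `M₁`, `M₂`, and the last term (the mutual information) is nonnegative
by the pointwise Gibbs inequality `a - b ≤ a log (a / b)`, integrated against `F`. For a symmetric
`F` the two marginals coincide.
-/

open MeasureTheory Real

lemma sub_le_mul_log_div {a b : ℝ} (ha : 0 ≤ a) (hb : 0 < b) : a - b ≤ a * log (a / b) := by
  rcases ha.eq_or_lt with rfl | ha
  · simpa using hb.le
  · have h := one_sub_inv_le_log_of_pos (div_pos ha hb)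
    rw [inv_div] at h
    calc a - b = a * (1 - b / a) := by field_simp
      _ ≤ a * log (a / b) := mul_le_mul_of_nonneg_left h ha.le

lemma sub_mul_le_mul_log_div_mul_sub_add {a b₁ b₂ m₁ m₂ : ℝ} (ha : 0 < a) (hb₁ : b₁ ≠ 0)
    (hb₂ : b₂ ≠ 0) (hm₁ : 0 < m₁) (hm₂ : 0 < m₂) :
    a - m₁ * m₂ ≤ a * log (a / (b₁ * b₂)) - (a * log (m₁ / b₁) + a * log (m₂ / b₂)) := by
  have hlog : log (a / (b₁ * b₂)) - log (m₁ / b₁) - log (m₂ / b₂) = log (a / (m₁ * m₂)) := by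
    rw [log_div ha.ne' (mul_ne_zero hb₁ hb₂), log_mul hb₁ hb₂, log_div hm₁.ne' hb₁,
      log_div hm₂.ne' hb₂, log_div ha.ne' (mul_pos hm₁ hm₂).ne', log_mul hm₁.ne' hm₂.ne']
    ring
  calc a - m₁ * m₂ ≤ a * log (a / (m₁ * m₂)) := sub_le_mul_log_div ha.le (mul_pos hm₁ hm₂)
    _ = _ := by rw [← hlog]; ring

lemma mul_mul_log_mul_div_self (a c : ℝ) : a * c * log (a * c / c) = a * log a * c := by
  rcases eq_or_ne c 0 with rfl | hc
  · simp
  · rw [mul_div_cancel_right₀ a hc]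
    ring

section Marginals

variable {α β : Type*} [MeasurableSpace α] [MeasurableSpace β] {μ : Measure α} {ν : Measure β}
  [SigmaFinite μ] [SigmaFinite ν]

/-- The paper's `S(h) = ∫ h log h γ` is `relEntropy (h * γ) γ volume`. Points where `g = 0`
contribute nothing, since `u / 0 = 0` and `log 0 = 0`. -/
noncomputable def relEntropy (u g : α → ℝ) (μ : Measure α) : ℝ := ∫ x, u x * log (u x / g x) ∂μ

noncomputable def marginalFst (F : α × β → ℝ) (ν : Measure β) (x : α) : ℝ := ∫ y, F (x, y) ∂ν

noncomputable def marginalSnd (F : α × β → ℝ) (μ : Measure α) (y : β) : ℝ := ∫ x, F (x, y) ∂μ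

omit [MeasurableSpace β] [SigmaFinite μ] [SigmaFinite ν] in
lemma marginalSnd_nonneg {F : α × β → ℝ} (hF0 : 0 ≤ F) (y : β) : 0 ≤ marginalSnd F μ y :=
  integral_nonneg fun x => hF0 (x, y)

omit [MeasurableSpace α] [SigmaFinite μ] [SigmaFinite ν] in
lemma marginalFst_nonneg {F : α × β → ℝ} (hF0 : 0 ≤ F) (x : α) : 0 ≤ marginalFst F ν x :=
  integral_nonneg fun y => hF0 (x, y)

lemma integrable_mul_comp_snd {F : α × β → ℝ} {φ : β → ℝ} (hF0 : 0 ≤ F)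
    (hF : Integrable F (μ.prod ν)) (hφ : AEStronglyMeasurable φ ν)
    (hFφ : Integrable (fun y => marginalSnd F μ y * φ y) ν) :
    Integrable (fun p => F p * φ p.2) (μ.prod ν) := by
  refine (integrable_prod_iff' (hF.1.mul hφ.comp_snd)).2 ⟨?_, ?_⟩
  · filter_upwards [hF.prod_left_ae] with y hy using hy.mul_const (φ y)
  · refine hFφ.norm.congr (ae_of_all _ fun y => ?_)
    show ‖marginalSnd F μ y * φ y‖ = ∫ x, ‖F (x, y) * φ y‖ ∂μ
    rw [norm_mul, norm_of_nonneg (marginalSnd_nonneg hF0 y), marginalSnd, ← integral_mul_const]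
    simp only [norm_mul, norm_of_nonneg (hF0 _)]

lemma integral_mul_comp_snd {F : α × β → ℝ} {φ : β → ℝ}
    (hFφ : Integrable (fun p => F p * φ p.2) (μ.prod ν)) :
    ∫ p, F p * φ p.2 ∂μ.prod ν = ∫ y, marginalSnd F μ y * φ y ∂ν := by
  simp only [integral_prod_symm _ hFφ, integral_mul_const, marginalSnd]

lemma integrable_mul_comp_fst {F : α × β → ℝ} {φ : α → ℝ} (hF0 : 0 ≤ F)
    (hF : Integrable F (μ.prod ν)) (hφ : AEStronglyMeasurable φ μ)
    (hFφ : Integrable (fun x => marginalFst F ν x * φ x) μ) :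
    Integrable (fun p => F p * φ p.1) (μ.prod ν) :=
  (integrable_mul_comp_snd (fun p => hF0 p.swap) hF.swap hφ hFφ).swap

lemma integral_mul_comp_fst {F : α × β → ℝ} {φ : α → ℝ}
    (hFφ : Integrable (fun p => F p * φ p.1) (μ.prod ν)) :
    ∫ p, F p * φ p.1 ∂μ.prod ν = ∫ x, marginalFst F ν x * φ x ∂μ :=
  (integral_prod_swap _).symm.trans (integral_mul_comp_snd hFφ.swap)

/-- Testing `F` against the indicator of `{marginalSnd F μ = 0}` gives `0`. -/
lemma ae_marginalSnd_pos {F : α × β → ℝ} (hF0 : 0 ≤ F) (hF : Integrable F (μ.prod ν)) :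
    ∀ᵐ p ∂μ.prod ν, F p ≠ 0 → 0 < marginalSnd F μ p.2 := by
  set ind : β → ℝ := fun y => ({0} : Set ℝ).indicator 1 (marginalSnd F μ y)
  have hind : AEStronglyMeasurable ind ν :=
    ((measurable_const.indicator (measurableSet_singleton 0)).comp_aemeasurable
      hF.swap.integral_prod_left.1.aemeasurable).aestronglyMeasurable
  have hvanish : (fun y => marginalSnd F μ y * ind y) = 0 := by
    ext y
    by_cases hy : marginalSnd F μ y = 0 <;> simp [ind, hy]
  have hint := integrable_mul_comp_snd hF0 hF hind (hvanish ▸ integrable_zero _ _ _)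
  have hzero : (fun p => F p * ind p.2) =ᵐ[μ.prod ν] 0 := by
    refine (integral_eq_zero_iff_of_nonneg (fun p => ?_) hint).1 ?_
    · exact mul_nonneg (hF0 p) (Set.indicator_nonneg (fun _ _ => zero_le_one) _)
    · rw [integral_mul_comp_snd hint, hvanish, Pi.zero_def, integral_zero]
  filter_upwards [hzero] with p hp hFp
  refine (marginalSnd_nonneg hF0 p.2).lt_of_ne' fun hM => hFp ?_
  simpa [ind, hM] using hp

lemma ae_marginalFst_pos {F : α × β → ℝ} (hF0 : 0 ≤ F) (hF : Integrable F (μ.prod ν)) :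
    ∀ᵐ p ∂μ.prod ν, F p ≠ 0 → 0 < marginalFst F ν p.1 :=
  Measure.measurePreserving_swap.quasiMeasurePreserving.ae
    (ae_marginalSnd_pos (fun p => hF0 p.swap) hF.swap)

theorem relEntropy_marginalFst_add_marginalSnd_le {F : α × β → ℝ} {g₁ : α → ℝ} {g₂ : β → ℝ}
    (hF0 : 0 ≤ F) (hF : Integrable F (μ.prod ν)) (hF1 : ∫ p, F p ∂μ.prod ν = 1)
    (hg₁ : AEStronglyMeasurable g₁ μ) (hg₂ : AEStronglyMeasurable g₂ ν)
    (hFg : ∀ p, F p ≠ 0 → g₁ p.1 ≠ 0 ∧ g₂ p.2 ≠ 0)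
    (hent : Integrable (fun p => F p * log (F p / (g₁ p.1 * g₂ p.2))) (μ.prod ν))
    (hent₁ : Integrable (fun x => marginalFst F ν x * log (marginalFst F ν x / g₁ x)) μ)
    (hent₂ : Integrable (fun y => marginalSnd F μ y * log (marginalSnd F μ y / g₂ y)) ν) :
    relEntropy (marginalFst F ν) g₁ μ + relEntropy (marginalSnd F μ) g₂ ν ≤
      relEntropy F (fun p => g₁ p.1 * g₂ p.2) (μ.prod ν) := by
  set M₁ := marginalFst F ν
  set M₂ := marginalSnd F μ
  have hM₁ : Integrable M₁ μ := hF.integral_prod_left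
  have hM₂ : Integrable M₂ ν := hF.swap.integral_prod_left
  have hM₁1 : ∫ x, M₁ x ∂μ = 1 := by rw [← hF1, integral_prod _ hF]; rfl
  have hM₂1 : ∫ y, M₂ y ∂ν = 1 := by rw [← hF1, integral_prod_symm _ hF]; rfl
  have hI₁ : Integrable (fun p => F p * log (M₁ p.1 / g₁ p.1)) (μ.prod ν) :=
    integrable_mul_comp_fst hF0 hF
      (hM₁.1.aemeasurable.div hg₁.aemeasurable).log.aestronglyMeasurable hent₁
  have hI₂ : Integrable (fun p => F p * log (M₂ p.2 / g₂ p.2)) (μ.prod ν) :=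
    integrable_mul_comp_snd hF0 hF
      (hM₂.1.aemeasurable.div hg₂.aemeasurable).log.aestronglyMeasurable hent₂
  have hM₁₂ : Integrable (fun p => M₁ p.1 * M₂ p.2) (μ.prod ν) := hM₁.mul_prod hM₂
  have hgibbs : ∀ᵐ p ∂μ.prod ν, F p - M₁ p.1 * M₂ p.2 ≤ F p * log (F p / (g₁ p.1 * g₂ p.2)) -
      (F p * log (M₁ p.1 / g₁ p.1) + F p * log (M₂ p.2 / g₂ p.2)) := by
    filter_upwards [ae_marginalFst_pos hF0 hF, ae_marginalSnd_pos hF0 hF] with p hM₁p hM₂p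
    rcases (hF0 p).eq_or_lt with hp | hp
    · rw [← hp]
      simpa using mul_nonneg (marginalFst_nonneg hF0 p.1) (marginalSnd_nonneg hF0 p.2)
    obtain ⟨hg₁p, hg₂p⟩ := hFg p hp.ne'
    exact sub_mul_le_mul_log_div_mul_sub_add hp hg₁p hg₂p (hM₁p hp.ne') (hM₂p hp.ne')
  have h := integral_mono_ae (hF.sub hM₁₂) (hent.sub (hI₁.add hI₂)) hgibbs
  rw [integral_sub' hF hM₁₂, integral_sub' hent (hI₁.add hI₂), integral_add' hI₁ hI₂, hF1,
    integral_prod_mul, hM₁1, hM₂1,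
    integral_mul_comp_fst (φ := fun x => log (M₁ x / g₁ x)) hI₁,
    integral_mul_comp_snd (φ := fun y => log (M₂ y / g₂ y)) hI₂] at h
  simp only [relEntropy]
  linarith

end Marginals

/-- Han's inequality, N = 2, symmetric case: For a product
probability density γ(v₁,v₂) = g(v₁)g(v₂) and a symmetric probability density h
w.r.t. γ, the marginal P₁h(v₂) = ∫h(w,v₂)g(w)dw satisfies S(P₁h) ≤ (1/2)S(h). -/
theorem han_inequality_two_symmetric (g : ℝ → ℝ) (hg0 : ∀ v, 0 ≤ g v)
    (hg1 : ∫ v : ℝ, g v = 1)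
    (h : ℝ → ℝ → ℝ) (hh0 : ∀ x y, 0 ≤ h x y) (hsym : ∀ x y, h x y = h y x)
    (hnorm : ∫ p : ℝ × ℝ, h p.1 p.2 * (g p.1 * g p.2) = 1)
    (hint : Integrable (fun p : ℝ × ℝ => h p.1 p.2 * Real.log (h p.1 p.2) * (g p.1 * g p.2)))
    (hint1 : Integrable (fun y : ℝ =>
      (∫ w : ℝ, h w y * g w) * Real.log (∫ w : ℝ, h w y * g w) * g y)) :
    ∫ y : ℝ, (∫ w : ℝ, h w y * g w) * Real.log (∫ w : ℝ, h w y * g w) * g y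
      ≤ (1 / 2) * ∫ p : ℝ × ℝ, h p.1 p.2 * Real.log (h p.1 p.2) * (g p.1 * g p.2) := by
  rw [Measure.volume_eq_prod] at hnorm hint ⊢
  set F : ℝ × ℝ → ℝ := fun p => h p.1 p.2 * (g p.1 * g p.2)
  have hg : Integrable g := .of_integral_ne_zero (by simp [hg1])
  have hF : Integrable F (volume.prod volume) := .of_integral_ne_zero (by simp [hnorm])
  have hmarg₂ (y : ℝ) : marginalSnd F volume y = (∫ w, h w y * g w) * g y := by
    simp only [marginalSnd, F, ← mul_assoc, integral_mul_const]
  have hmarg₁ (x : ℝ) : marginalFst F volume x = (∫ w, h w x * g w) * g x := by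
    rw [marginalFst, ← integral_mul_const]
    congr 1 with y
    rw [hsym]
    ring
  have key := relEntropy_marginalFst_add_marginalSnd_le (F := F) (g₁ := g) (g₂ := g)
    (fun p => mul_nonneg (hh0 _ _) (mul_nonneg (hg0 _) (hg0 _))) hF hnorm hg.1 hg.1
    (fun p hp => mul_ne_zero_iff.1 (right_ne_zero_of_mul hp))
    (by simpa only [F, mul_mul_log_mul_div_self] using hint)
    (by simpa only [hmarg₁, mul_mul_log_mul_div_self] using hint1)
    (by simpa only [hmarg₂, mul_mul_log_mul_div_self] using hint1)
  simp only [relEntropy, hmarg₁, hmarg₂, F, mul_mul_log_mul_div_self] at key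
  linarith
end

section
/- Under the hypotheses of the Kac model with partial Maxwellian thermostat: if S(Qh) ≤ S(h), Σ_{j=2}^N S(P₁Q_{1j}h) ≤ (N−1−1/2)S(h), and P₁ is an entropy-contracting projection, then for all t ≥ 0, S(e^{μ(P₁−I)t}Qh) ≤ (1 − (1−e^{−μt})/(N(N−1)))·S(h). -/
/-!
Since `e^{μ(P₁-I)t}Qh` is the convex combination `e^{-μt} Qh + (1 - e^{-μt}) P₁Qh`, it suffices
to bound `S(P₁Qh)`. By Jensen, `S(P₁Qh)` is at most the average of `S(P₁Q_{ij}h)` over the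
`C(N,2)` pairs. Every pair contributes at most `S(h)`, and the `N - 1` pairs `(1, j)` together
save `S(h)/2`, which gives the factor `1 - 1/(2 C(N,2)) = 1 - 1/(N(N-1))`.
-/

open Finset

theorem ConvexOn.map_card_inv_smul_sum_le {ι E : Type*} [AddCommGroup E] [Module ℝ E]
    {s : Set E} {S : E → ℝ} (hS : ConvexOn ℝ s S) {A : Finset ι} (hA : A.Nonempty) {x : ι → E}
    (hx : ∀ i ∈ A, x i ∈ s) :
    S ((#A : ℝ)⁻¹ • ∑ i ∈ A, x i) ≤ (#A : ℝ)⁻¹ * ∑ i ∈ A, S (x i) := by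
  rw [smul_sum, mul_sum]
  refine hS.map_sum_le (fun _ _ => by positivity) ?_ hx
  rw [sum_const, nsmul_eq_mul, mul_inv_cancel₀ (by exact_mod_cast hA.card_ne_zero)]

theorem Finset.sum_le_card_mul_sub_of_subset {ι : Type*} [DecidableEq ι] {A B : Finset ι}
    {f : ι → ℝ} {s δ : ℝ} (hBA : B ⊆ A) (hB : ∑ i ∈ B, f i ≤ #B * s - δ)
    (hf : ∀ i ∈ A \ B, f i ≤ s) :
    ∑ i ∈ A, f i ≤ #A * s - δ := by
  have hrest := sum_le_card_nsmul _ _ _ hf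
  rw [← sum_sdiff hBA, ← card_sdiff_add_card_eq_card hBA, nsmul_eq_mul] at *
  push_cast
  linarith

theorem Fin.card_filter_fst_lt_snd (N : ℕ) :
    #{p : Fin N × Fin N | p.1 < p.2} = N.choose 2 := by
  simpa using card_product_filter_lt (s := (univ : Finset (Fin N)))

theorem Fin.filter_fst_lt_snd_filter_fst_eq {N : ℕ} (i : Fin N) :
    ({p : Fin N × Fin N | p.1 < p.2} : Finset _).filter (·.1 = i) =
      (Ioi i).map ⟨(i, ·), Prod.mk_right_injective i⟩ := by
  ext ⟨a, b⟩
  simp only [mem_filter, mem_univ, true_and, mem_map, mem_Ioi, Function.Embedding.coeFn_mk,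
    Prod.mk.injEq, exists_eq_right_right]
  grind

section Kac

variable {E : Type*} [AddCommGroup E] [Module ℝ E] {N : ℕ} (S : E → ℝ)
  (Qij : Fin N → Fin N → E →ₗ[ℝ] E) (P1 : E →ₗ[ℝ] E) (h : E)

theorem sum_entropy_thermostat_pairs_le (hP1entropy : ∀ u : E, S (P1 u) ≤ S u)
    (hQij : ∀ i j : Fin N, i < j → S (Qij i j h) ≤ S h) {i : Fin N} {δ : ℝ}
    (hP1Qij : ∑ j ∈ Ioi i, S (P1 (Qij i j h)) ≤ #(Ioi i) * S h - δ) :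
    ∑ p ∈ {p : Fin N × Fin N | p.1 < p.2}, S (P1 (Qij p.1 p.2 h)) ≤
      N.choose 2 * S h - δ := by
  rw [← Fin.card_filter_fst_lt_snd N]
  refine sum_le_card_mul_sub_of_subset (filter_subset (·.1 = i) _) ?_ fun p hp => ?_
  · rwa [Fin.filter_fst_lt_snd_filter_fst_eq, sum_map, card_map]
  · simp only [mem_sdiff, mem_filter, mem_univ, true_and] at hp
    exact (hP1entropy _).trans (hQij _ _ hp.1)

theorem entropy_thermostat_kacAverage_le (hS : ConvexOn ℝ Set.univ S) (hN : 2 ≤ N)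
    (hP1entropy : ∀ u : E, S (P1 u) ≤ S u)
    (hQij : ∀ i j : Fin N, i < j → S (Qij i j h) ≤ S h) {i : Fin N}
    (hP1Qij : ∑ j ∈ Ioi i, S (P1 (Qij i j h)) ≤ (#(Ioi i) - 1 / 2 : ℝ) * S h) :
    S (P1 ((((N.choose 2 : ℝ))⁻¹ • ∑ p ∈ {p : Fin N × Fin N | p.1 < p.2}, Qij p.1 p.2) h)) ≤
      (1 - 1 / (N * (N - 1 : ℝ))) * S h := by
  set A : Finset (Fin N × Fin N) := {p | p.1 < p.2}
  have hcard : #A = N.choose 2 := Fin.card_filter_fst_lt_snd N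
  have hA : A.Nonempty := card_pos.mp (hcard ▸ Nat.choose_pos hN)
  have hpairs := sum_entropy_thermostat_pairs_le S Qij P1 h hP1entropy hQij (δ := S h / 2)
    (hP1Qij.trans_eq (by ring))
  calc _ = S ((#A : ℝ)⁻¹ • ∑ p ∈ A, P1 (Qij p.1 p.2 h)) := by
          simp [hcard, map_sum, LinearMap.sum_apply]
    _ ≤ (#A : ℝ)⁻¹ * ∑ p ∈ A, S (P1 (Qij p.1 p.2 h)) := 
          hS.map_card_inv_smul_sum_le hA fun _ _ => Set.mem_univ _
    _ ≤ (N.choose 2 : ℝ)⁻¹ * (N.choose 2 * S h - S h / 2) := by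
          rw [hcard]; exact mul_le_mul_of_nonneg_left hpairs (by positivity)
    _ = _ := by
      rw [Nat.cast_choose_two]
      have hN1 : (N : ℝ) - 1 ≠ 0 := by
        rw [sub_ne_zero]; exact_mod_cast (by omega : N ≠ 1)
      field_simp

end Kac

/-- If S is convex, S(Q_{ij}h) ≤ S(h) for all i<j (hence S(Qh) ≤ S(h)),
Σ_{j=2}^N S(P₁Q_{1j}h) ≤ (N−3/2)S(h), and P₁ is an entropy-contracting projection,
then S(e^{μ(P₁−I)t}Qh) ≤ (1 − (1−e^{−μt})/(N(N−1)))S(h), where Q is the Kac average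
and e^{μ(P₁−I)t} = e^{−μt}I + (1−e^{−μt})P₁ since P₁ is a projection. -/
theorem entropy_exp_thermostat_kac {E : Type*} [AddCommGroup E] [Module ℝ E]
    (N : ℕ) (hN : 2 ≤ N) (S : E → ℝ)
    (hconv : ∀ a b : ℝ, 0 ≤ a → 0 ≤ b → a + b = 1 →
      ∀ x y : E, S (a • x + b • y) ≤ a * S x + b * S y)
    (Qij : Fin N → Fin N → E →ₗ[ℝ] E) (P1 : E →ₗ[ℝ] E)
    (hP1entropy : ∀ u : E, S (P1 u) ≤ S u)
    (h : E)
    (hQij : ∀ i j : Fin N, i < j → S (Qij i j h) ≤ S h)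
    (hQ : S ((((N.choose 2 : ℝ))⁻¹ • ∑ p ∈ univ.filter
        (fun p : Fin N × Fin N => p.1 < p.2), Qij p.1 p.2) h) ≤ S h)
    (hP1Q1j : ∑ j ∈ univ.filter (fun j : Fin N => (⟨0, by omega⟩ : Fin N) < j),
        S (P1 (Qij ⟨0, by omega⟩ j h)) ≤ ((N : ℝ) - 3 / 2) * S h)
    (t mu : ℝ) (ht : 0 ≤ t) (hmu : 0 < mu) :
    S (Real.exp (-mu * t) •
          (((N.choose 2 : ℝ))⁻¹ • ∑ p ∈ univ.filter
            (fun p : Fin N × Fin N => p.1 < p.2), Qij p.1 p.2) h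
        + (1 - Real.exp (-mu * t)) •
          P1 ((((N.choose 2 : ℝ))⁻¹ • ∑ p ∈ univ.filter
            (fun p : Fin N × Fin N => p.1 < p.2), Qij p.1 p.2) h))
      ≤ (1 - (1 - Real.exp (-mu * t)) / (N * (N - 1 : ℝ))) * S h := by
  have hcard_Ioi : (#(Ioi (⟨0, by omega⟩ : Fin N)) : ℝ) = N - 1 := by
    rw [Fin.card_Ioi, Nat.sub_zero, Nat.cast_sub (by omega), Nat.cast_one]
  rw [filter_lt_eq_Ioi, show (N : ℝ) - 3 / 2 = #(Ioi _) - 1 / 2 by rw [hcard_Ioi]; ring] at hP1Q1j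
  have hP1Q := entropy_thermostat_kacAverage_le S Qij P1 h
    ⟨convex_univ, fun x _ y _ a b ha hb hab => hconv a b ha hb hab x y⟩ hN hP1entropy hQij hP1Q1j
  have hexp_le_one : Real.exp (-mu * t) ≤ 1 := Real.exp_le_one_iff.mpr (by nlinarith)
  calc _ ≤ Real.exp (-mu * t) * S _ + (1 - Real.exp (-mu * t)) * S (P1 _) :=
        hconv _ _ (Real.exp_pos _).le (sub_nonneg.mpr hexp_le_one) (add_sub_cancel _ _) _ _
    _ ≤ Real.exp (-mu * t) * S h
        + (1 - Real.exp (-mu * t)) * ((1 - 1 / (N * (N - 1 : ℝ))) * S h) := by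
        gcongr
    _ = _ := by ring
end

section
/- Let A(t) = 1 − m(1−e^{−μt})/(N(N−1)) and define φ = Σ_{k≥0}(Nλ)^k A^{*k}*1, where * is Laplace convolution (A^{*0}*1 := 1). Then φ(t) = (−δ₋e^{(Nλ−δ₊)t} + δ₊e^{(Nλ−δ₋)t})/(δ₊−δ₋), where δ_± = (Nλ+μ)/2 ± (1/2)√((Nλ+μ)² − 4mλμ/(N−1)). -/
/-!
φ is the Neumann series of the Volterra equation `F = 1 + Nλ · (A * F)`. For any continuous
kernel `A` and continuous solution `F`, unrolling the equation `n` times gives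
`F = ∑_{k<n} (Nλ)^k A^{*k} * 1 + (Nλ)^n A^{*n} * F`, and a Picard-type estimate bounds the
remainder by `M (Nλ a |t|)^n / n!`, where `a` and `M` bound `|A|` and `|F|` on `[-|t|, |t|]`;
so the series sums to `F`. It remains to check that the closed form solves the equation.
With `c = m/(N(N-1))` the kernel is `A(s) = (1-c) + c e^{-μs}`, convolutions of exponentials
are explicit, and the identity reduces to `δ₊, δ₋` being the roots of `x² - (Nλ+μ)x + Nλμc`;
since `0 < δ₋ < Nλ < δ₊`, no two of the exponents involved coincide.
-/

open Real MeasureTheory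

/-- Laplace convolution (f*g)(t) = ∫₀^t f(t−s)g(s) ds. -/
noncomputable def lapConv (f g : ℝ → ℝ) : ℝ → ℝ :=
  fun t => ∫ s in (0:ℝ)..t, f (t - s) * g s

/-- Iterated Laplace convolution A^{*k} * 1, with A^{*0} * 1 := 1. -/
noncomputable def iterConv (A : ℝ → ℝ) : ℕ → ℝ → ℝ
  | 0 => fun _ => 1
  | k + 1 => lapConv A (iterConv A k)

open Set Filter Topology
open scoped Nat Interval

section Convolution

variable {A f g h : ℝ → ℝ}

theorem continuous_lapConv (hf : Continuous f) (hg : Continuous g) : Continuous (lapConv f g) :=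
  intervalIntegral.continuous_parametric_intervalIntegral_of_continuous
    (by fun_prop : Continuous fun p : ℝ × ℝ => f (p.1 - p.2) * g p.2) continuous_id

theorem continuous_iterate_lapConv (hA : Continuous A) (hg : Continuous g) (n : ℕ) :
    Continuous ((lapConv A)^[n] g) := by
  induction n with
  | zero => exact hg
  | succ n ih => simpa only [Function.iterate_succ_apply'] using continuous_lapConv hA ih

theorem iterConv_eq_iterate (A : ℝ → ℝ) (n : ℕ) : iterConv A n = (lapConv A)^[n] fun _ => 1 := by
  induction n with
  | zero => rfl
  | succ n ih => rw [Function.iterate_succ_apply', ← ih, iterConv]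

theorem lapConv_add_const_mul (hf : Continuous f) (hg : Continuous g) (hh : Continuous h)
    (c t : ℝ) : lapConv f (fun s => g s + c * h s) t = lapConv f g t + c * lapConv f h t := by
  simp only [lapConv, mul_add, mul_left_comm _ c]
  rw [intervalIntegral.integral_add ((by fun_prop : Continuous _).intervalIntegrable _ _)
      ((by fun_prop : Continuous _).intervalIntegrable _ _),
    intervalIntegral.integral_const_mul]

theorem abs_lapConv_le {a C s : ℝ} {n : ℕ} (hAa : ∀ u, |u| ≤ |s| → |A u| ≤ a)
    (hgC : ∀ u, |u| ≤ |s| → |g u| ≤ C * |u| ^ n / n !) :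
    |lapConv A g s| ≤ a * C * |s| ^ (n + 1) / (n + 1)! := by
  have hbound : ∀ u ∈ Ι 0 s, ‖A (s - u) * g u‖ ≤ a * C / n ! * |u - 0| ^ n := by
    intro u hu
    have hu : u ∈ uIcc 0 s := uIoc_subset_uIcc hu
    have hsu : |s - u| ≤ |s| := by simpa using abs_sub_right_of_mem_uIcc hu
    have hus : |u| ≤ |s| := by simpa using abs_sub_left_of_mem_uIcc hu
    have hA' := hAa _ hsu
    rw [Real.norm_eq_abs, abs_mul, sub_zero]
    calc |A (s - u)| * |g u| ≤ a * (C * |u| ^ n / n !) :=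
          mul_le_mul hA' (hgC u hus) (abs_nonneg _) ((abs_nonneg _).trans hA')
      _ = a * C / n ! * |u| ^ n := by ring
  calc |lapConv A g s| = ‖∫ u in Ι 0 s, A (s - u) * g u‖ := by
        rw [← Real.norm_eq_abs]; exact intervalIntegral.norm_intervalIntegral_eq _ _ _ _
    _ ≤ ∫ u in Ι 0 s, a * C / n ! * |u - 0| ^ n :=
        norm_integral_le_of_norm_le (Continuous.integrableOn_uIoc (by fun_prop))
          ((ae_restrict_mem measurableSet_uIoc).mono hbound)
    _ = a * C * |s| ^ (n + 1) / (n + 1)! := by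
        rw [integral_const_mul, integral_pow_abs_sub_uIoc, sub_zero, Nat.factorial_succ]
        push_cast
        field_simp

theorem abs_iterate_lapConv_le {T a M : ℝ} (hAa : ∀ u, |u| ≤ T → |A u| ≤ a)
    (hgM : ∀ u, |u| ≤ T → |g u| ≤ M) (n : ℕ) {s : ℝ} (hs : |s| ≤ T) :
    |(lapConv A)^[n] g s| ≤ M * a ^ n * |s| ^ n / n ! := by
  induction n generalizing s with
  | zero => simpa using hgM s hs
  | succ n ih =>
    rw [Function.iterate_succ_apply']
    calc _ ≤ a * (M * a ^ n) * |s| ^ (n + 1) / (n + 1)! :=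
          abs_lapConv_le (fun u hu => hAa u (hu.trans hs)) fun u hu => ih (hu.trans hs)
      _ = M * a ^ (n + 1) * |s| ^ (n + 1) / (n + 1)! := by ring

end Convolution

section Volterra

variable {A F : ℝ → ℝ} {L : ℝ}

theorem iterate_lapConv_eq_iterConv_add (hA : Continuous A) (hF : Continuous F)
    (hvol : ∀ t, F t = 1 + L * lapConv A F t) (n : ℕ) (t : ℝ) :
    (lapConv A)^[n] F t = iterConv A n t + L * (lapConv A)^[n + 1] F t := by
  induction n generalizing t with
  | zero => exact hvol t
  | succ n ih =>
    rw [Function.iterate_succ_apply', funext ih, lapConv_add_const_mul hA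
      (by simpa only [iterConv_eq_iterate] using continuous_iterate_lapConv hA continuous_const n)
      (continuous_iterate_lapConv hA hF _), ← Function.iterate_succ_apply' (lapConv A)]
    rfl

theorem eq_sum_iterConv_add_remainder (hA : Continuous A) (hF : Continuous F)
    (hvol : ∀ t, F t = 1 + L * lapConv A F t) (n : ℕ) (t : ℝ) :
    F t = ∑ k ∈ Finset.range n, L ^ k * iterConv A k t + L ^ n * (lapConv A)^[n] F t := by
  induction n with
  | zero => simp
  | succ n ih =>
    rw [ih, iterate_lapConv_eq_iterConv_add hA hF hvol n t, Finset.sum_range_succ]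
    ring

theorem hasSum_iterConv_of_volterra (hA : Continuous A) (hF : Continuous F)
    (hvol : ∀ t, F t = 1 + L * lapConv A F t) (t : ℝ) :
    HasSum (fun k => L ^ k * iterConv A k t) (F t) := by
  obtain ⟨a, ha⟩ := (isCompact_closedBall (0 : ℝ) |t|).exists_bound_of_continuousOn hA.continuousOn
  obtain ⟨M, hM⟩ := (isCompact_closedBall (0 : ℝ) |t|).exists_bound_of_continuousOn hF.continuousOn
  simp only [mem_closedBall_zero_iff, Real.norm_eq_abs] at ha hM
  have hscale : ∀ (C x : ℝ) (n : ℕ), |x| ≤ C * a ^ n * |t| ^ n / n ! →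
      ‖L ^ n * x‖ ≤ C * ((|L| * a * |t|) ^ n / n !) := fun C x n hx => by
    rw [norm_mul, norm_pow, Real.norm_eq_abs, Real.norm_eq_abs, mul_pow, mul_pow]
    calc |L| ^ n * |x| ≤ |L| ^ n * (C * a ^ n * |t| ^ n / n !) := by gcongr
      _ = _ := by ring
  have hiter : ∀ k, |iterConv A k t| ≤ 1 * a ^ k * |t| ^ k / k ! := fun k => by
    rw [iterConv_eq_iterate]
    exact abs_iterate_lapConv_le ha (fun _ _ => abs_one.le) k le_rfl
  have hsummable : Summable fun k => L ^ k * iterConv A k t :=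
    .of_norm_bounded (Real.summable_pow_div_factorial (|L| * a * |t|)) fun k => by
      simpa using hscale 1 _ k (hiter k)
  have hremainder : Tendsto (fun n => L ^ n * (lapConv A)^[n] F t) atTop (𝓝 0) := by
    refine squeeze_zero_norm (fun n => hscale M _ n (abs_iterate_lapConv_le ha hM n le_rfl)) ?_
    simpa using (FloorSemiring.tendsto_pow_div_factorial_atTop (|L| * a * |t|)).const_mul M
  rw [hsummable.hasSum_iff_tendsto_nat]
  have hpartial : (fun n => ∑ k ∈ Finset.range n, L ^ k * iterConv A k t)
      = fun n => F t - L ^ n * (lapConv A)^[n] F t := by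
    funext n
    rw [eq_sum_iterConv_add_remainder hA hF hvol n t]
    ring
  simpa [hpartial] using hremainder.const_sub (F t)

end Volterra

theorem lapConv_exp_exp {α β : ℝ} (h : α ≠ β) (t : ℝ) :
    lapConv (fun s => exp (α * s)) (fun s => exp (β * s)) t
      = (exp (α * t) - exp (β * t)) / (α - β) := by
  have hsplit : ∀ s, exp (α * (t - s)) * exp (β * s) = exp (α * t) * exp ((β - α) * s) := by
    intro s
    rw [← exp_add, ← exp_add]
    ring_nf
  have hshift : exp (α * t) * exp ((β - α) * t) = exp (β * t) := by
    rw [← exp_add]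
    ring_nf
  simp only [lapConv, hsplit, intervalIntegral.integral_const_mul,
    intervalIntegral.integral_comp_mul_left (fun x => exp x) (sub_ne_zero.2 h.symm),
    integral_exp, mul_zero, exp_zero, smul_eq_mul]
  rw [mul_left_comm, mul_sub, hshift, mul_one, ← neg_sub β α, div_neg, ← neg_div, neg_sub,
    inv_mul_eq_div]

theorem lapConv_sum_exp {ι κ : Type*} [Fintype ι] [Fintype κ] (a α : ι → ℝ) (b β : κ → ℝ)
    (h : ∀ i j, α i ≠ β j) (t : ℝ) :
    lapConv (fun s => ∑ i, a i * exp (α i * s)) (fun s => ∑ j, b j * exp (β j * s)) t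
      = ∑ i, ∑ j, a i * b j * ((exp (α i * t) - exp (β j * t)) / (α i - β j)) := by
  simp only [← lapConv_exp_exp (h _ _)]
  simp only [lapConv, Finset.sum_mul_sum]
  rw [intervalIntegral.integral_finsetSum fun i _ => ?_]
  · refine Finset.sum_congr rfl fun i _ => ?_
    rw [intervalIntegral.integral_finsetSum fun j _ => ?_]
    · refine Finset.sum_congr rfl fun j _ => ?_
      rw [← intervalIntegral.integral_const_mul]
      congr 1
      ext s
      ring
    · exact (by fun_prop : Continuous _).intervalIntegrable _ _
  · exact (by fun_prop : Continuous _).intervalIntegrable _ _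

theorem two_exp_eq_one_add_mul_lapConv {L μ c dp dm : ℝ} (hsum : dp + dm = L + μ)
    (hprod : dp * dm = L * μ * c) (hdp : dp ≠ 0) (hdm : dm ≠ 0) (hd : dp ≠ dm) (hLdp : L ≠ dp)
    (hLdm : L ≠ dm) (t : ℝ) :
    (-dm * exp ((L - dp) * t) + dp * exp ((L - dm) * t)) / (dp - dm)
      = 1 + L * lapConv (fun s => 1 - c + c * exp (-μ * s))
          (fun s => (-dm * exp ((L - dp) * s) + dp * exp ((L - dm) * s)) / (dp - dm)) t := by
  have hkernel : (fun s => 1 - c + c * exp (-μ * s))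
      = fun s => ∑ i, ![1 - c, c] i * exp (![0, -μ] i * s) := by
    ext s
    simp [Fin.sum_univ_two]
  have hF : (fun s => (-dm * exp ((L - dp) * s) + dp * exp ((L - dm) * s)) / (dp - dm))
      = fun s => ∑ j, ![-dm / (dp - dm), dp / (dp - dm)] j * exp (![L - dp, L - dm] j * s) := by
    ext s
    simp only [Fin.sum_univ_two, Matrix.cons_val_zero, Matrix.cons_val_one]
    ring
  have hexps : ∀ i j, ![0, -μ] i ≠ ![L - dp, L - dm] j := by
    simp only [Fin.forall_fin_two, Matrix.cons_val_zero, Matrix.cons_val_one, ne_eq]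
    refine ⟨⟨?_, ?_⟩, ?_, ?_⟩ <;> intro h
    exacts [hLdp (by linarith), hLdm (by linarith), hdm (by linarith), hdp (by linarith)]
  rw [hkernel, hF, lapConv_sum_exp _ _ _ _ hexps]
  simp only [Fin.sum_univ_two, Matrix.cons_val_zero, Matrix.cons_val_one, zero_mul, exp_zero]
  have hL : L ≠ 0 := by rintro rfl; simp_all
  have hμ : μ ≠ 0 := by rintro rfl; simp_all
  -- Vieta's relations express `μ` and `c` through the roots: the rest is a rational identity.
  obtain rfl : μ = dp + dm - L := by linarith
  obtain rfl : c = dp * dm / (L * (dp + dm - L)) := by field_simp; linarith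
  have hd' : dp - dm ≠ 0 := sub_ne_zero.2 hd
  have hLdp' : dp - L ≠ 0 := sub_ne_zero.2 hLdp.symm
  have hLdm' : dm - L ≠ 0 := sub_ne_zero.2 hLdm.symm
  rw [show -(dp + dm - L) - (L - dp) = -dm by ring, show -(dp + dm - L) - (L - dm) = -dp by ring,
    zero_sub, zero_sub, neg_sub, neg_sub]
  field_simp
  ring

theorem quadratic_roots_interlace {L μ c r : ℝ} (hL : 0 < L) (hμ : 0 < μ) (hc0 : 0 < c)
    (hc1 : c < 1) (hr0 : 0 ≤ r) (hr : r ^ 2 = (L + μ) ^ 2 - 4 * L * μ * c) :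
    0 < (L + μ) / 2 - r / 2 ∧ (L + μ) / 2 - r / 2 < L ∧ L < (L + μ) / 2 + r / 2 := by
  have hLμc : 0 < L * μ * c := by positivity
  have hLμc' : 0 < L * μ * (1 - c) := by have := sub_pos.2 hc1; positivity
  refine ⟨?_, ?_, ?_⟩ <;> nlinarith

theorem dyson_series_phi_formula_general (N m : ℕ) (hm1 : 1 ≤ m) (hmN : m < N)
    (lam mu : ℝ) (hlam : 0 < lam) (hmu : 0 < mu) (t : ℝ) :
    let A : ℝ → ℝ := fun s => 1 - m * (1 - Real.exp (-mu * s)) / (N * (N - 1 : ℝ))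
    let dp : ℝ := (N * lam + mu) / 2
      + Real.sqrt ((N * lam + mu) ^ 2 - 4 * m * lam * mu / (N - 1 : ℝ)) / 2
    let dm : ℝ := (N * lam + mu) / 2
      - Real.sqrt ((N * lam + mu) ^ 2 - 4 * m * lam * mu / (N - 1 : ℝ)) / 2
    (∑' k : ℕ, (N * lam) ^ k * iterConv A k t)
      = (-dm * Real.exp ((N * lam - dp) * t) + dp * Real.exp ((N * lam - dm) * t))
          / (dp - dm) := by
  intro A dp dm
  have hm : (1 : ℝ) ≤ m := mod_cast hm1
  have hmN' : (m : ℝ) + 1 ≤ N := mod_cast hmN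
  have hN1 : (0 : ℝ) < N - 1 := by linarith
  have hN0 : (0 : ℝ) < N := by linarith
  obtain ⟨c, hc⟩ : ∃ c : ℝ, c = m / (N * (N - 1)) := ⟨_, rfl⟩
  have hc0 : 0 < c := by rw [hc]; positivity
  have hc1 : c < 1 := by rw [hc, div_lt_one (by positivity)]; nlinarith
  have hA : A = fun s => 1 - c + c * exp (-mu * s) := by ext s; simp only [A, hc]; ring
  have hr2 : √((N * lam + mu) ^ 2 - 4 * m * lam * mu / (N - 1 : ℝ)) ^ 2
      = (N * lam + mu) ^ 2 - 4 * (N * lam) * mu * c := by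
    have hdisc : (N * lam + mu) ^ 2 - 4 * m * lam * mu / (N - 1 : ℝ)
        = (N * lam - mu) ^ 2 + 4 * (N * lam) * mu * (1 - c) := by rw [hc]; field_simp; ring
    have hc1' := sub_pos.2 hc1
    rw [hdisc, sq_sqrt (by positivity)]
    ring
  obtain ⟨hdm0, hdmL, hLdp⟩ : 0 < dm ∧ dm < N * lam ∧ N * lam < dp :=
    quadratic_roots_interlace (by positivity) hmu hc0 hc1 (sqrt_nonneg _) hr2
  have hsum : dp + dm = N * lam + mu := by ring
  have hprod : dp * dm = N * lam * mu * c := by linear_combination (-hr2) / 4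
  rw [hA]
  exact (hasSum_iterConv_of_volterra (by fun_prop) (by fun_prop) (fun s =>
    two_exp_eq_one_add_mul_lapConv hsum hprod (by linarith) hdm0.ne' (by linarith) hLdp.ne
      hdmL.ne' s) t).tsum_eq

/-- With A(t) = 1 − m(1−e^{−μt})/(N(N−1)), the Dyson-series function
φ = Σ_k (Nλ)^k A^{*k}*1 equals (−δ₋e^{(Nλ−δ₊)t} + δ₊e^{(Nλ−δ₋)t})/(δ₊−δ₋), where
δ_± = (Nλ+μ)/2 ± (1/2)√((Nλ+μ)² − 4mλμ/(N−1)). -/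
theorem dyson_series_phi_formula (N m : ℕ) (hN : 2 ≤ N) (hm1 : 1 ≤ m) (hmN : m < N)
    (lam mu : ℝ) (hlam : 0 < lam) (hmu : 0 < mu) (t : ℝ) (ht : 0 ≤ t) :
    let A : ℝ → ℝ := fun s => 1 - m * (1 - Real.exp (-mu * s)) / (N * (N - 1 : ℝ))
    let dp : ℝ := (N * lam + mu) / 2
      + Real.sqrt ((N * lam + mu) ^ 2 - 4 * m * lam * mu / (N - 1 : ℝ)) / 2
    let dm : ℝ := (N * lam + mu) / 2
      - Real.sqrt ((N * lam + mu) ^ 2 - 4 * m * lam * mu / (N - 1 : ℝ)) / 2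
    (∑' k : ℕ, (N * lam) ^ k * iterConv A k t)
      = (-dm * Real.exp ((N * lam - dp) * t) + dp * Real.exp ((N * lam - dm) * t))
          / (dp - dm) :=
  dyson_series_phi_formula_general N m hm1 hmN lam mu hlam hmu t
end

section
/- Taking the van Hove rescaling (μ,λ) → (μ/λ, 1) in D(t): with δ_±(λ) = (2 + μ/λ)/2 ± (1/2)√((2+μ/λ)² − 4μ/λ) (the case N = 2, m = 1 with λ replaced by 1 and μ by μ/λ), the function D_λ(t) = (−δ₋e^{−δ₊t} + δ₊e^{−δ₋t})/(δ₊−δ₋) converges pointwise to e^{−t} as λ → 0⁺, for each fixed t ≥ 0 and μ > 0. -/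
open Real Filter Topology

/-! With `x = μ/λ → ∞` the discriminant becomes `x² + 4`, so `δ₋ = 1 + (x - √(x² + 4))/2 → 1`
while `δ₊ → ∞`. Writing `D = δ₊/(δ₊ - δ₋) · e^{-δ₋ t} - δ₋/(δ₊ - δ₋) · e^{-δ₊ t}`, the first
weight tends to `1` and the second to `0`, and for `t ≥ 0` the factor `e^{-δ₊ t}` stays in
`(0, 1]`, so `D → e^{-t}`. -/

theorem tendsto_sub_sqrt_sq_add_atTop (c : ℝ) :
    Tendsto (fun x : ℝ => x - √(x ^ 2 + c)) atTop (𝓝 0) := by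
  have hden : Tendsto (fun x : ℝ => x + √(x ^ 2 + c)) atTop atTop :=
    tendsto_atTop_mono (fun x => le_add_of_nonneg_right (sqrt_nonneg _)) tendsto_id
  refine ((tendsto_const_nhds (x := -c)).div_atTop hden).congr' ?_
  filter_upwards [eventually_ge_atTop (|c| + 1)] with x hx
  have hsq : √(x ^ 2 + c) ^ 2 = x ^ 2 + c :=
    sq_sqrt (by nlinarith [abs_nonneg c, neg_abs_le c])
  have hpos : 0 < x + √(x ^ 2 + c) := by
    linarith [abs_nonneg c, sqrt_nonneg (x ^ 2 + c)]
  rw [div_eq_iff hpos.ne']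
  linear_combination hsq

theorem tendsto_two_rate_mixture {α : Type*} {l : Filter α} {p m : α → ℝ} {c t : ℝ}
    (ht : 0 ≤ t) (hm : Tendsto m l (𝓝 c)) (hp : Tendsto p l atTop) :
    Tendsto (fun x => (-m x * exp (-p x * t) + p x * exp (-m x * t)) / (p x - m x)) l
      (𝓝 (exp (-c * t))) := by
  have hgap : Tendsto (fun x => p x - m x) l atTop := by
    simpa only [sub_eq_add_neg] using hp.atTop_add hm.neg
  have hsmall : Tendsto (fun x => m x / (p x - m x)) l (𝓝 0) := hm.div_atTop hgap
  have hfast : Tendsto (fun x => m x / (p x - m x) * exp (-p x * t)) l (𝓝 0) := by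
    refine hsmall.zero_mul_isBoundedUnder_le (isBoundedUnder_of_eventually_le (a := 1) ?_)
    filter_upwards [hp.eventually_ge_atTop 0] with x hx
    simp only [Function.comp_apply, norm_eq_abs, abs_exp, exp_le_one_iff]
    nlinarith
  have hslow : Tendsto (fun x => (1 + m x / (p x - m x)) * exp (-m x * t)) l
      (𝓝 (exp (-c * t))) := by
    simpa using (hsmall.const_add 1).mul ((continuous_exp.tendsto _).comp (hm.neg.mul_const t))
  rw [← sub_zero (exp (-c * t))]
  refine (hslow.sub hfast).congr' ?_
  filter_upwards [hgap.eventually_gt_atTop 0] with x hx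
  field_simp
  ring

theorem tendsto_smaller_root_atTop :
    Tendsto (fun x : ℝ => (2 + x - √((2 + x) ^ 2 - 4 * x)) / 2) atTop (𝓝 1) := by
  simp only [show ∀ x : ℝ, (2 + x) ^ 2 - 4 * x = x ^ 2 + 4 from fun x => by ring]
  have h := ((tendsto_sub_sqrt_sq_add_atTop 4).div_const 2).const_add 1
  rw [zero_div, add_zero] at h
  exact h.congr fun x => by ring

theorem tendsto_larger_root_atTop :
    Tendsto (fun x : ℝ => (2 + x + √((2 + x) ^ 2 - 4 * x)) / 2) atTop atTop :=
  tendsto_atTop_mono (fun x => by dsimp only [id]; linarith [sqrt_nonneg ((2 + x) ^ 2 - 4 * x)])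
    (tendsto_id.atTop_div_const two_pos)

/-- van Hove rescaling: with a = 2 + μ/λ and
δ_±(λ) = (a ± √(a² − 4μ/λ))/2, the function
D_λ(t) = (−δ₋e^{−δ₊t} + δ₊e^{−δ₋t})/(δ₊−δ₋) converges to e^{−t} as λ → 0⁺,
for each fixed t ≥ 0 and μ > 0. -/
theorem van_hove_entropy_limit (mu : ℝ) (hmu : 0 < mu) (t : ℝ) (ht : 0 ≤ t) :
    Tendsto (fun lam : ℝ =>
        let a : ℝ := 2 + mu / lam
        let dp : ℝ := (a + Real.sqrt (a ^ 2 - 4 * mu / lam)) / 2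
        let dm : ℝ := (a - Real.sqrt (a ^ 2 - 4 * mu / lam)) / 2
        (-dm * Real.exp (-dp * t) + dp * Real.exp (-dm * t)) / (dp - dm))
      (nhdsWithin 0 (Set.Ioi 0)) (nhds (Real.exp (-t))) := by
  have hx : Tendsto (fun lam : ℝ => mu / lam) (𝓝[>] 0) atTop := by
    simpa only [div_eq_mul_inv] using tendsto_inv_nhdsGT_zero.const_mul_atTop hmu
  have h := tendsto_two_rate_mixture ht (tendsto_smaller_root_atTop.comp hx)
    (tendsto_larger_root_atTop.comp hx)
  simpa only [neg_one_mul, Function.comp_apply, mul_div_assoc] using h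
end

section
/- In L²(ℝ², γ) with γ the standard 2D Gaussian, let Q be the orthogonal projection onto radial functions and P the orthogonal projection onto functions independent of v₁ (Gaussian conditional expectation over v₁). Then the Hermite functions H₂(v₁), H₂(v₂) span an invariant subspace of L = 2λ(I−Q) + μ(I−P), and the restriction of L to span{H₂(v₁), H₂(v₂)} has smallest eigenvalue ((2λ+μ) − √(4λ²+μ²))/2, with eigenvector (2λ/(2λ+μ−Δ))H₂(v₁) + (2λ/(2λ−Δ))H₂(v₂) up to scaling, where Δ = ((2λ+μ) − √(4λ²+μ²))/2. -/
/-!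
On span{H₂(v₁), H₂(v₂)} the rotation average `Q` replaces both coefficients by their mean
(the average of `(a cos θ + b sin θ)²` over a period is `(a² + b²) / 2`), and `P` kills the
coefficient of `H₂(v₁)` because `∫ (w² - 1) γ(w) dw = 0`. Hence `L` acts on coefficient
vectors by the symmetric matrix `[[λ + μ, -λ], [-λ, λ]]`, whose characteristic polynomial
`t² - (2λ + μ) t + λμ` has discriminant `4λ² + μ²` and smaller root `Δ`.
-/

open Real MeasureTheory

lemma integral_exp_neg_sq_div_two : ∫ x : ℝ, exp (-x ^ 2 / 2) = √(2 * π) := by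
  have h := integral_gaussian (1 / 2)
  rw [div_div_eq_mul_div, div_one, mul_comm] at h
  simpa only [neg_mul, one_div_mul_eq_div, neg_div] using h

lemma integrable_exp_neg_sq_div_two : Integrable fun x : ℝ => exp (-x ^ 2 / 2) := by
  simpa only [neg_mul, one_div_mul_eq_div, neg_div] using
    integrable_exp_neg_mul_sq (by norm_num : (0 : ℝ) < 1 / 2)

lemma integrable_sub_one_mul_exp_neg_sq_div_two :
    Integrable fun x : ℝ => (x ^ 2 - 1) * exp (-x ^ 2 / 2) := by
  have hsq : Integrable fun x : ℝ => x ^ 2 * exp (-x ^ 2 / 2) := by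
    simpa only [rpow_two, neg_mul, one_div_mul_eq_div, neg_div] using
      integrable_rpow_mul_exp_neg_mul_sq (by norm_num : (0 : ℝ) < 1 / 2) (s := 2) (by norm_num)
  simp_rw [sub_mul, one_mul]
  exact hsq.sub integrable_exp_neg_sq_div_two

lemma integral_sub_one_mul_exp_neg_sq_div_two :
    ∫ x : ℝ, (x ^ 2 - 1) * exp (-x ^ 2 / 2) = 0 := by
  have hderiv (x : ℝ) : HasDerivAt (fun y => -y * exp (-y ^ 2 / 2))
      ((x ^ 2 - 1) * exp (-x ^ 2 / 2)) x := by
    have hexp : HasDerivAt (fun y : ℝ => -y ^ 2 / 2) (-x) x :=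
      (hasDerivAt_pow 2 x).fun_neg.div_const 2 |>.congr_deriv (by ring)
    exact (hasDerivAt_neg x).fun_mul hexp.exp |>.congr_deriv (by ring)
  have hlin : Integrable fun x : ℝ => x * exp (-x ^ 2 / 2) := by
    simpa only [neg_mul, one_div_mul_eq_div, neg_div] using
      integrable_mul_exp_neg_mul_sq (by norm_num : (0 : ℝ) < 1 / 2)
  refine integral_eq_zero_of_hasDerivAt_of_integrable hderiv
    integrable_sub_one_mul_exp_neg_sq_div_two ?_
  simp_rw [neg_mul]
  exact hlin.neg

lemma integral_mul_cos_add_mul_sin_sq (a b : ℝ) :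
    ∫ θ in (0 : ℝ)..2 * π, (a * cos θ + b * sin θ) ^ 2 = π * (a ^ 2 + b ^ 2) := by
  have hexpand : (fun θ => (a * cos θ + b * sin θ) ^ 2) =
      fun θ => a ^ 2 * cos θ ^ 2 + b ^ 2 * sin θ ^ 2 + 2 * a * b * (sin θ * cos θ) := by
    funext θ; ring
  have hint {f : ℝ → ℝ} (hf : Continuous f) : IntervalIntegrable f volume 0 (2 * π) :=
    hf.intervalIntegrable _ _
  rw [hexpand, intervalIntegral.integral_add (hint (by fun_prop)) (hint (by fun_prop)),
    intervalIntegral.integral_add (hint (by fun_prop)) (hint (by fun_prop)),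
    intervalIntegral.integral_const_mul, intervalIntegral.integral_const_mul,
    intervalIntegral.integral_const_mul, integral_cos_sq, integral_sin_sq, integral_sin_mul_cos₁]
  simp only [sin_two_pi, cos_two_pi, sin_zero, cos_zero]
  ring

def hermiteTwoComb (x y : ℝ) (p : ℝ × ℝ) : ℝ := x * (p.1 ^ 2 - 1) + y * (p.2 ^ 2 - 1)

-- `kacAverage`, `gaussianMarginal` and `twoParticleGenerator` are the `Q`, `P` and `L` of the
-- statement, with `stdGaussianDensity` its `g`.
noncomputable def kacAverage (u : ℝ × ℝ → ℝ) (p : ℝ × ℝ) : ℝ :=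
  (1 / (2 * π)) * ∫ θ in (0 : ℝ)..(2 * π),
    u (p.1 * cos θ + p.2 * sin θ, -p.1 * sin θ + p.2 * cos θ)

noncomputable def stdGaussianDensity (v : ℝ) : ℝ := (1 / √(2 * π)) * exp (-v ^ 2 / 2)

noncomputable def gaussianMarginal (u : ℝ × ℝ → ℝ) (p : ℝ × ℝ) : ℝ :=
  ∫ w : ℝ, u (w, p.2) * stdGaussianDensity w

noncomputable def twoParticleGenerator (lam mu : ℝ) (u : ℝ × ℝ → ℝ) (p : ℝ × ℝ) : ℝ :=
  2 * lam * (u p - kacAverage u p) + mu * (u p - gaussianMarginal u p)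

lemma kacAverage_hermiteTwoComb (x y : ℝ) :
    kacAverage (hermiteTwoComb x y) = hermiteTwoComb ((x + y) / 2) ((x + y) / 2) := by
  funext p
  obtain ⟨a, b⟩ := p
  have hrot : ∀ θ, -a * sin θ + b * cos θ = b * cos θ + -a * sin θ := fun θ => by ring
  have hint {f : ℝ → ℝ} (hf : Continuous f) : IntervalIntegrable f volume 0 (2 * π) :=
    hf.intervalIntegrable _ _
  simp only [kacAverage, hermiteTwoComb, hrot]
  rw [intervalIntegral.integral_add (hint (by fun_prop)) (hint (by fun_prop)),
    intervalIntegral.integral_const_mul, intervalIntegral.integral_const_mul,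
    intervalIntegral.integral_sub (hint (by fun_prop)) intervalIntegrable_const,
    intervalIntegral.integral_sub (hint (by fun_prop)) intervalIntegrable_const,
    integral_mul_cos_add_mul_sin_sq, integral_mul_cos_add_mul_sin_sq,
    intervalIntegral.integral_const, smul_eq_mul]
  field_simp
  ring

lemma gaussianMarginal_hermiteTwoComb (x y : ℝ) :
    gaussianMarginal (hermiteTwoComb x y) = hermiteTwoComb 0 y := by
  funext p
  have hsplit : (fun w => hermiteTwoComb x y (w, p.2) * stdGaussianDensity w) = fun w =>
      x / √(2 * π) * ((w ^ 2 - 1) * exp (-w ^ 2 / 2)) +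
        y * (p.2 ^ 2 - 1) / √(2 * π) * exp (-w ^ 2 / 2) := by
    funext w; simp only [hermiteTwoComb, stdGaussianDensity]; ring
  have hsqrt : √(2 * π) ≠ 0 := by positivity
  simp only [gaussianMarginal, hsplit]
  rw [integral_add (integrable_sub_one_mul_exp_neg_sq_div_two.const_mul _)
      (integrable_exp_neg_sq_div_two.const_mul _), integral_const_mul, integral_const_mul,
    integral_sub_one_mul_exp_neg_sq_div_two, integral_exp_neg_sq_div_two]
  simp only [hermiteTwoComb]
  field_simp
  ring

lemma twoParticleGenerator_hermiteTwoComb (lam mu x y : ℝ) :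
    twoParticleGenerator lam mu (hermiteTwoComb x y) =
      hermiteTwoComb ((lam + mu) * x - lam * y) (lam * y - lam * x) := by
  funext p
  simp only [twoParticleGenerator, kacAverage_hermiteTwoComb, gaussianMarginal_hermiteTwoComb,
    hermiteTwoComb]
  ring

lemma charpoly_eq_zero_of_eigenvector {a b c d t x y : ℝ} (h₁ : a * x + b * y = t * x)
    (h₂ : c * x + d * y = t * y) (hxy : ¬(x = 0 ∧ y = 0)) :
    (a - t) * (d - t) - b * c = 0 := by
  by_contra hdet
  refine hxy ⟨(mul_eq_zero.mp ?_).resolve_left hdet, (mul_eq_zero.mp ?_).resolve_left hdet⟩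
  · linear_combination (d - t) * h₁ - b * h₂
  · linear_combination (a - t) * h₂ - c * h₁

lemma sub_sqrt_discrim_div_two_le {s q D t : ℝ} (hD : s ^ 2 - 4 * q = D)
    (ht : t ^ 2 - s * t + q = 0) : (s - √D) / 2 ≤ t := by
  have hsq : D = (2 * t - s) ^ 2 := by linear_combination -hD - 4 * ht
  rw [hsq, sqrt_sq_eq_abs]
  linarith [neg_abs_le (2 * t - s)]

lemma sub_sqrt_discrim_div_two_isRoot {s q D : ℝ} (hD : s ^ 2 - 4 * q = D) (hD₀ : 0 ≤ D) :
    ((s - √D) / 2) ^ 2 - s * ((s - √D) / 2) + q = 0 := by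
  linear_combination (sq_sqrt hD₀ - hD) / 4

lemma abs_lt_sqrt_add_sq {a : ℝ} (ha : 0 < a) (b : ℝ) : |b| < √(a + b ^ 2) :=
  (lt_sqrt (abs_nonneg b)).mpr (by rw [sq_abs]; linarith)

lemma eigenvector_coeffs_of_isRoot {lam mu r : ℝ}
    (hr : r ^ 2 - (2 * lam + mu) * r + lam * mu = 0) (h₁ : 2 * lam + mu - r ≠ 0) (h₂ : 2 * lam - r ≠ 0) :
    (lam + mu) * (2 * lam / (2 * lam + mu - r)) - lam * (2 * lam / (2 * lam - r)) =
        r * (2 * lam / (2 * lam + mu - r)) ∧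
      lam * (2 * lam / (2 * lam - r)) - lam * (2 * lam / (2 * lam + mu - r)) =
        r * (2 * lam / (2 * lam - r)) := by
  simp only [mul_div_assoc']
  constructor
  · rw [div_sub_div _ _ h₁ h₂, div_eq_div_iff (mul_ne_zero h₁ h₂) h₁]
    linear_combination (2 * lam * (2 * lam + mu - r)) * hr
  · rw [div_sub_div _ _ h₂ h₁, div_eq_div_iff (mul_ne_zero h₂ h₁) h₂]
    linear_combination (2 * lam * (2 * lam - r)) * hr

theorem gap_eigenfunction_two_particles_general (lam mu : ℝ) (hlam : 0 < lam) :
    let g : ℝ → ℝ := fun v => (1 / Real.sqrt (2 * π)) * Real.exp (-v ^ 2 / 2)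
    let Q : (ℝ × ℝ → ℝ) → (ℝ × ℝ → ℝ) := fun u p =>
      (1 / (2 * π)) * ∫ θ in (0 : ℝ)..(2 * π),
        u (p.1 * Real.cos θ + p.2 * Real.sin θ, -p.1 * Real.sin θ + p.2 * Real.cos θ)
    let P : (ℝ × ℝ → ℝ) → (ℝ × ℝ → ℝ) := fun u p => ∫ w : ℝ, u (w, p.2) * g w
    let L : (ℝ × ℝ → ℝ) → (ℝ × ℝ → ℝ) := fun u p =>
      2 * lam * (u p - Q u p) + mu * (u p - P u p)
    let e₁ : ℝ × ℝ → ℝ := fun p => p.1 ^ 2 - 1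
    let e₂ : ℝ × ℝ → ℝ := fun p => p.2 ^ 2 - 1
    let Δ : ℝ := ((2 * lam + mu) - Real.sqrt (4 * lam ^ 2 + mu ^ 2)) / 2
    -- invariance of span{H₂(v₁), H₂(v₂)} under L
    (∃ a b c d : ℝ, (∀ p, L e₁ p = a * e₁ p + b * e₂ p) ∧
        (∀ p, L e₂ p = c * e₁ p + d * e₂ p)) ∧
    -- Δ is an eigenvalue with the stated eigenvector
    (∀ p, L (fun w => (2 * lam / (2 * lam + mu - Δ)) * e₁ w
            + (2 * lam / (2 * lam - Δ)) * e₂ w) p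
        = Δ * ((2 * lam / (2 * lam + mu - Δ)) * e₁ p
            + (2 * lam / (2 * lam - Δ)) * e₂ p)) ∧
    -- Δ is the smallest eigenvalue of the restriction of L to span{e₁, e₂}
    (∀ t x y : ℝ, ¬(x = 0 ∧ y = 0) →
      (∀ p, L (fun w => x * e₁ w + y * e₂ w) p = t * (x * e₁ p + y * e₂ p)) →
      Δ ≤ t) := by
  intro g Q P L e₁ e₂ Δ
  have hL : ∀ x y, L (fun w => x * e₁ w + y * e₂ w) =
      fun p => ((lam + mu) * x - lam * y) * e₁ p + (lam * y - lam * x) * e₂ p :=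
    twoParticleGenerator_hermiteTwoComb lam mu
  have hdiscrim : (2 * lam + mu) ^ 2 - 4 * (lam * mu) = 4 * lam ^ 2 + mu ^ 2 := by ring
  have hroot : Δ ^ 2 - (2 * lam + mu) * Δ + lam * mu = 0 :=
    sub_sqrt_discrim_div_two_isRoot hdiscrim (by positivity)
  obtain ⟨hneg_sqrt_lt, hlt_sqrt⟩ :=
    abs_lt.mp (abs_lt_sqrt_add_sq (by positivity : 0 < 4 * lam ^ 2) mu)
  refine ⟨⟨lam + mu, -lam, -lam, lam, fun p => ?_, fun p => ?_⟩, fun p => ?_,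
    fun t x y hxy hLt => ?_⟩
  · simpa using congrFun (hL 1 0) p
  · simpa using congrFun (hL 0 1) p
  · obtain ⟨h₁, h₂⟩ := eigenvector_coeffs_of_isRoot hroot (by simp only [Δ]; linarith)
      (by simp only [Δ]; linarith)
    rw [hL]
    linear_combination e₁ p * h₁ + e₂ p * h₂
  · have h₁ := hLt (0, 1)
    have h₂ := hLt (1, 0)
    rw [hL] at h₁ h₂
    norm_num [e₁, e₂] at h₁ h₂
    have hchar := charpoly_eq_zero_of_eigenvector (a := lam + mu) (b := -lam) (c := -lam)
      (d := lam) (by linarith) (by linarith) hxy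
    exact sub_sqrt_discrim_div_two_le hdiscrim (by linear_combination hchar)

/-- For L = 2λ(I−Q) + μ(I−P) with Q the Kac rotation average and P
the Gaussian conditional expectation over v₁, the span of H₂(v₁) = v₁²−1 and
H₂(v₂) = v₂²−1 is invariant under L; on it the smallest eigenvalue is
Δ = ((2λ+μ) − √(4λ²+μ²))/2, with eigenvector
(2λ/(2λ+μ−Δ))H₂(v₁) + (2λ/(2λ−Δ))H₂(v₂). -/
theorem gap_eigenfunction_two_particles (lam mu : ℝ) (hlam : 0 < lam) (hmu : 0 < mu) :
    let g : ℝ → ℝ := fun v => (1 / Real.sqrt (2 * π)) * Real.exp (-v ^ 2 / 2)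
    let Q : (ℝ × ℝ → ℝ) → (ℝ × ℝ → ℝ) := fun u p =>
      (1 / (2 * π)) * ∫ θ in (0:ℝ)..(2 * π),
        u (p.1 * Real.cos θ + p.2 * Real.sin θ, -p.1 * Real.sin θ + p.2 * Real.cos θ)
    let P : (ℝ × ℝ → ℝ) → (ℝ × ℝ → ℝ) := fun u p => ∫ w : ℝ, u (w, p.2) * g w
    let L : (ℝ × ℝ → ℝ) → (ℝ × ℝ → ℝ) := fun u p =>
      2 * lam * (u p - Q u p) + mu * (u p - P u p)
    let e₁ : ℝ × ℝ → ℝ := fun p => p.1 ^ 2 - 1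
    let e₂ : ℝ × ℝ → ℝ := fun p => p.2 ^ 2 - 1
    let Δ : ℝ := ((2 * lam + mu) - Real.sqrt (4 * lam ^ 2 + mu ^ 2)) / 2
    -- invariance of span{H₂(v₁), H₂(v₂)} under L
    (∃ a b c d : ℝ, (∀ p, L e₁ p = a * e₁ p + b * e₂ p) ∧
        (∀ p, L e₂ p = c * e₁ p + d * e₂ p)) ∧
    -- Δ is an eigenvalue with the stated eigenvector
    (∀ p, L (fun w => (2 * lam / (2 * lam + mu - Δ)) * e₁ w
            + (2 * lam / (2 * lam - Δ)) * e₂ w) p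
        = Δ * ((2 * lam / (2 * lam + mu - Δ)) * e₁ p
            + (2 * lam / (2 * lam - Δ)) * e₂ p)) ∧
    -- Δ is the smallest eigenvalue of the restriction of L to span{e₁, e₂}
    (∀ t x y : ℝ, ¬(x = 0 ∧ y = 0) →
      (∀ p, L (fun w => x * e₁ w + y * e₂ w) p = t * (x * e₁ p + y * e₂ p)) →
      Δ ≤ t) :=
  gap_eigenfunction_two_particles_general lam mu hlam
end
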